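/- arXiv:1607.05772 — 7 statements merged into one kernel-verified Lean document; each statement's English description precedes it below -/
import Mathlib

section
/- Let K be an algebraically closed field of characteristic 0, let q = p^k be a prime power with q ≥ 2, and let G ⊆ PGL₃(K) be a finite subgroup isomorphic to the cyclic group ℤ/qℤ. Then there exist an element φ ∈ PGL₃(K), a primitive q-th root of unity ζ ∈ K, and an integer m such that the conjugate subgroup φ⁻¹Gφ is the cyclic subgroup of PGL₃(K) generated by the class [diag(1, ζ, ζ^m)] of the diagonal matrix with entries 1, ζ, ζ^m. -/
open Matrix MvPolynomial
open scoped Classical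

noncomputable section

/-- `PGL₃(K)`: the quotient of `GL₃(K)` by its center (the nonzero scalar matrices). -/
abbrev PGL3 (K : Type*) [Field K] : Type _ :=
  GL (Fin 3) K ⧸ Subgroup.center (GL (Fin 3) K)

/-- The class in `PGL₃(K)` of a matrix (sent to `1` if the matrix is not invertible). -/
def toPGL3 {K : Type*} [Field K] (M : Matrix (Fin 3) (Fin 3) K) : PGL3 K :=
  if h : M.det ≠ 0 then
    QuotientGroup.mk (Matrix.GeneralLinearGroup.mkOfDetNeZero M h) else 1

/-- The automorphism group (as a set of classes in `PGL₃(K)`) of a polynomial self-map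
`F` of `K³`: the classes `[M]` such that `F(M·v) = c·M·F(v)` for some `c ≠ 0` and all `v`. -/
def AutQ {K : Type*} [Field K] (F : (Fin 3 → K) → (Fin 3 → K)) : Set (PGL3 K) :=
  {φ | ∃ M : GL (Fin 3) K, (QuotientGroup.mk M : PGL3 K) = φ ∧
    ∃ c : K, c ≠ 0 ∧ ∀ v : Fin 3 → K,
      F ((M : Matrix (Fin 3) (Fin 3) K) *ᵥ v) = c • ((M : Matrix (Fin 3) (Fin 3) K) *ᵥ F v)}

/-- Two polynomial self-maps of `K³` are `PGL₃(K)`-conjugate. -/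
def PGLConj {K : Type*} [Field K] (F F' : (Fin 3 → K) → (Fin 3 → K)) : Prop :=
  ∃ (M : Matrix (Fin 3) (Fin 3) K) (c : K), M.det ≠ 0 ∧ c ≠ 0 ∧
    ∀ v : Fin 3 → K, F (M *ᵥ v) = c • (M *ᵥ F' v)

/-- The `n`-fold composite of the polynomial self-map of `K³` whose coordinates are the
polynomials `P 0, P 1, P 2`, as a triple of polynomials (the `0`-th iterate is the identity). -/
def iterComp {K : Type*} [CommSemiring K] (P : Fin 3 → MvPolynomial (Fin 3) K) :
    ℕ → Fin 3 → MvPolynomial (Fin 3) K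
  | 0 => fun i => MvPolynomial.X i
  | n + 1 => fun i => MvPolynomial.aeval (iterComp P n) (P i)

section AuxLemmas

variable {K : Type*} [Field K]

lemma aux_scalar_mem_center (c : K) (Z : GL (Fin 3) K)
    (hZc : (Z : Matrix (Fin 3) (Fin 3) K) = c • 1) : Z ∈ Subgroup.center (GL (Fin 3) K) := by
  rw [Subgroup.mem_center_iff]
  intro g
  apply Units.ext
  rw [Units.val_mul, Units.val_mul, hZc, smul_mul_assoc, mul_smul_comm, one_mul, mul_one]

lemma aux_coe_mem_center (Z : GL (Fin 3) K)
    (hZ : Z ∈ Subgroup.center (GL (Fin 3) K)) :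
    ∃ c : K, c ≠ 0 ∧ (Z : Matrix (Fin 3) (Fin 3) K) = c • 1 := by
  rw [Subgroup.mem_center_iff] at hZ
  have hcomm : Pairwise fun i j =>
      Commute (single i j (1:K)) (Z : Matrix (Fin 3) (Fin 3) K) := by
    intro i j hij
    set E := single i j (1:K) with hE
    have hE2 : E * E = 0 := by
      rw [hE, single_mul_single_of_ne (h := Ne.symm hij)]
    have h1 : (1 + E) * (1 - E) = 1 := by
      rw [mul_sub, add_mul, add_mul, one_mul, mul_one, hE2]; rw [add_zero, one_mul]; abel
    have h2 : (1 - E) * (1 + E) = 1 := by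
      rw [sub_mul, mul_add, mul_add, one_mul, mul_one, hE2]; rw [add_zero, one_mul]; abel
    have hU := hZ ⟨1 + E, 1 - E, h1, h2⟩
    have hU' : (1 + E) * (Z : Matrix (Fin 3) (Fin 3) K)
        = (Z : Matrix (Fin 3) (Fin 3) K) * (1 + E) := by
      have := congrArg Units.val hU
      simpa [Units.val_mul] using this
    have : E * (Z : Matrix (Fin 3) (Fin 3) K) = (Z : Matrix (Fin 3) (Fin 3) K) * E := by
      rw [add_mul, mul_add, one_mul, mul_one] at hU'
      exact add_left_cancel hU'
    exact this
  obtain ⟨c, hc⟩ := mem_range_scalar_of_commute_single hcomm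
  refine ⟨c, ?_, ?_⟩
  · intro h0
    have hdet : IsUnit ((Z : Matrix (Fin 3) (Fin 3) K).det) :=
      (Matrix.isUnit_iff_isUnit_det _).mp Z.isUnit
    rw [← hc, h0, map_zero] at hdet
    simp at hdet
  · rw [← hc]; ext i j
    by_cases h : i = j <;>
      simp [Matrix.scalar_apply, Matrix.one_apply, Matrix.diagonal_apply, h]

lemma aux_mk_eq_mk_of_smul (X Y : GL (Fin 3) K) (c : K) (hc : c ≠ 0)
    (h : (Y : Matrix (Fin 3) (Fin 3) K) = c • (X : Matrix (Fin 3) (Fin 3) K)) :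
    (QuotientGroup.mk X : PGL3 K) = QuotientGroup.mk Y := by
  rw [QuotientGroup.eq]
  apply aux_scalar_mem_center c
  rw [Units.val_mul, h, mul_smul_comm]
  congr 1
  exact X.inv_mul

lemma aux_exists_diag_conj {K : Type*} [Field K] [IsAlgClosed K] [CharZero K]
    (A : Matrix (Fin 3) (Fin 3) K) (q : ℕ) (hq : 0 < q) (hAq : A ^ q = 1) :
    ∃ (N : Matrix (Fin 3) (Fin 3) K) (d : Fin 3 → K),
      N.det ≠ 0 ∧ A * N = N * Matrix.diagonal d := by
  set f : Module.End K (Fin 3 → K) := Matrix.toLinAlgEquiv' A with hf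
  have haev : Polynomial.aeval f (Polynomial.X ^ q - 1 : Polynomial K) = 0 := by
    have : f ^ q = 1 := by
      rw [hf, ← map_pow, hAq, _root_.map_one]
    simp [this]
  have hsf : Squarefree (Polynomial.X ^ q - 1 : Polynomial K) :=
    (Polynomial.X_pow_sub_one_separable_iff.mpr
      (Nat.cast_ne_zero.mpr hq.ne')).squarefree
  have hss := Module.End.isSemisimple_of_squarefree_aeval_eq_zero hsf haev
  have hspan : ⨆ μ : K, f.eigenspace μ = ⊤ := by
    have := Module.End.iSup_maxGenEigenspace_eq_top f
    simpa only [hss.isFinitelySemisimple.maxGenEigenspace_eq_eigenspace] using this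
  have htop : Submodule.span K (⋃ μ : K, (f.eigenspace μ : Set (Fin 3 → K))) = ⊤ := by
    rw [← Submodule.iSup_eq_span, hspan]
  obtain ⟨b, hb_sub, hb_span, hb_li⟩ :=
    exists_linearIndependent K (⋃ μ : K, (f.eigenspace μ : Set (Fin 3 → K)))
  rw [htop] at hb_span
  let basis0 : Module.Basis b K (Fin 3 → K) :=
    Module.Basis.mk hb_li (by rw [Subtype.range_coe, hb_span])
  let e : b ≃ Fin 3 := basis0.indexEquiv (Pi.basisFun K (Fin 3))
  let bb : Module.Basis (Fin 3) K (Fin 3 → K) := basis0.reindex e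
  have hbb : ∀ i : Fin 3, ∃ μ : K, f (bb i) = μ • bb i := by
    intro i
    have hmem : (bb i : Fin 3 → K) ∈ ⋃ μ : K, (f.eigenspace μ : Set (Fin 3 → K)) := by
      apply hb_sub
      have : bb i = basis0 (e.symm i) := basis0.reindex_apply e i
      rw [this, Module.Basis.mk_apply]
      exact (e.symm i).2
    obtain ⟨s, ⟨μ, rfl⟩, hs⟩ := hmem
    exact ⟨μ, Module.End.mem_eigenspace_iff.mp hs⟩
  choose d hd using hbb
  have hd' : ∀ i, A *ᵥ bb i = d i • bb i := by
    intro i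
    have := hd i
    rwa [hf, Matrix.toLinAlgEquiv'_apply] at this
  refine ⟨(Pi.basisFun K (Fin 3)).toMatrix bb, d, ?_, ?_⟩
  · have hmul := Module.Basis.toMatrix_mul_toMatrix_flip (Pi.basisFun K (Fin 3)) bb
    have : ((Pi.basisFun K (Fin 3)).toMatrix bb).det
        * (bb.toMatrix (Pi.basisFun K (Fin 3))).det = 1 := by
      rw [← Matrix.det_mul, hmul, Matrix.det_one]
    intro h0
    rw [h0, zero_mul] at this
    exact zero_ne_one this
  · ext i j
    have hcol : ∀ l, (Pi.basisFun K (Fin 3)).toMatrix bb l j = bb j l := by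
      intro l
      simp [Module.Basis.toMatrix_apply]
    rw [Matrix.mul_diagonal]
    have h1 : (A * (Pi.basisFun K (Fin 3)).toMatrix bb) i j = (A *ᵥ bb j) i := by
      simp only [Matrix.mul_apply, Matrix.mulVec, dotProduct, hcol]
    rw [h1, hd' j, Pi.smul_apply, smul_eq_mul, hcol i, mul_comm]

end AuxLemmas


theorem stmt0 {K : Type*} [Field K] [IsAlgClosed K] [CharZero K]
    (p k : ℕ) (hp : p.Prime) (hk : 1 ≤ k)
    (G : Subgroup (PGL3 K)) (hG : Nonempty (G ≃* Multiplicative (ZMod (p ^ k)))) :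
    ∃ (φ : PGL3 K) (ζ : K) (m : ℤ),
      IsPrimitiveRoot ζ (p ^ k) ∧
      Subgroup.map (MulAut.conj φ⁻¹).toMonoidHom G =
        Subgroup.closure {toPGL3 (Matrix.diagonal ![1, ζ, ζ ^ m])} := by
  classical
  set q := p ^ k with hqdef
  have hq1 : 1 < q := Nat.one_lt_pow (by omega) hp.one_lt
  have hq0 : 0 < q := by omega
  haveI : NeZero q := ⟨hq0.ne'⟩
  obtain ⟨e⟩ := hG
  set g₀ : G := e.symm (Multiplicative.ofAdd 1) with hg₀
  set g : PGL3 K := (g₀ : PGL3 K) with hg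
  -- `G` is generated by `g`
  have hGzp : G = Subgroup.zpowers g := by
    apply le_antisymm
    · intro x hx
      have hx' : (⟨x, hx⟩ : G) = g₀ ^ ((Multiplicative.toAdd (e ⟨x, hx⟩)).val) := by
        apply e.injective
        rw [map_pow, hg₀, MulEquiv.apply_symm_apply]
        set c : ZMod q := Multiplicative.toAdd (e ⟨x, hx⟩) with hc
        have : (Multiplicative.ofAdd (1 : ZMod q)) ^ c.val
            = Multiplicative.ofAdd ((c.val : ZMod q)) := by
          rw [← ofAdd_nsmul]
          congr 1
          simp [nsmul_eq_mul]
        rw [this, ZMod.natCast_rightInverse c, hc, ofAdd_toAdd]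
      have hx'' : x = g ^ ((Multiplicative.toAdd (e ⟨x, hx⟩)).val) := by
        have := congrArg (Subtype.val) hx'
        simpa [hg] using this
      rw [hx'']
      exact zpow_natCast g _ ▸ Subgroup.zpow_mem _ (Subgroup.mem_zpowers g) _
    · rw [Subgroup.zpowers_le]
      exact g₀.2
  -- `g` has order `q`
  have horder : orderOf g = q := by
    rw [hg, Subgroup.orderOf_coe]
    rw [← orderOf_injective e.toMonoidHom e.injective g₀]
    rw [hg₀]
    show orderOf (e (e.symm (Multiplicative.ofAdd 1))) = q
    rw [MulEquiv.apply_symm_apply]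
    rw [orderOf_ofAdd_eq_addOrderOf]
    exact ZMod.addOrderOf_one q
  -- lift `g` to `GL`
  obtain ⟨M₀, hM₀⟩ := QuotientGroup.mk_surjective g
  have hgq : g ^ q = 1 := by rw [← horder]; exact pow_orderOf_eq_one g
  have hM₀q : (M₀ ^ q) ∈ Subgroup.center (GL (Fin 3) K) := by
    rw [← QuotientGroup.eq_one_iff]
    show (QuotientGroup.mk' (Subgroup.center (GL (Fin 3) K))) (M₀ ^ q) = 1
    rw [map_pow]
    show (QuotientGroup.mk M₀ : PGL3 K) ^ q = 1
    rw [hM₀, hgq]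
  obtain ⟨c, hc0, hcM⟩ := aux_coe_mem_center _ hM₀q
  rw [Units.val_pow_eq_pow_val] at hcM
  obtain ⟨μ, hμ⟩ := IsAlgClosed.exists_pow_nat_eq (c⁻¹) hq0
  have hμ0 : μ ≠ 0 := by
    intro h
    rw [h, zero_pow hq0.ne'] at hμ
    exact inv_ne_zero hc0 hμ.symm
  -- rescale to get a matrix of exact order q
  set zsc : GL (Fin 3) K := ⟨μ • 1, μ⁻¹ • 1,
    by rw [smul_mul_assoc, mul_smul_comm, one_mul, smul_smul, mul_inv_cancel₀ hμ0, one_smul],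
    by rw [smul_mul_assoc, mul_smul_comm, one_mul, smul_smul, inv_mul_cancel₀ hμ0, one_smul]⟩
    with hzsc
  set Aunit : GL (Fin 3) K := zsc * M₀ with hAunit
  set Aval : Matrix (Fin 3) (Fin 3) K := μ • (M₀ : Matrix (Fin 3) (Fin 3) K) with hAval
  have hAunitval : (Aunit : Matrix (Fin 3) (Fin 3) K) = Aval := by
    rw [hAunit, Units.val_mul, hAval, hzsc]
    show (μ • 1) * (M₀ : Matrix (Fin 3) (Fin 3) K) = _
    rw [smul_mul_assoc, one_mul]
  have hAq : Aval ^ q = 1 := by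
    rw [hAval, smul_pow, hcM, hμ, smul_smul, inv_mul_cancel₀ hc0, one_smul]
  have hgAunit : (QuotientGroup.mk Aunit : PGL3 K) = g := by
    show (QuotientGroup.mk' (Subgroup.center (GL (Fin 3) K))) Aunit = g
    rw [hAunit, _root_.map_mul]
    have hz1 : (QuotientGroup.mk' (Subgroup.center (GL (Fin 3) K))) zsc = 1 :=
      (QuotientGroup.eq_one_iff _).mpr (aux_scalar_mem_center μ zsc rfl)
    rw [hz1, one_mul]
    exact hM₀
  -- diagonalize
  obtain ⟨N, d, hNdet, hAN⟩ := aux_exists_diag_conj Aval q hq0 hAq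
  have key : ∀ (N : Matrix (Fin 3) (Fin 3) K) (d : Fin 3 → K),
      Aval * N = N * Matrix.diagonal d →
      ∀ n : ℕ, Aval ^ n * N = N * (Matrix.diagonal d) ^ n := by
    intro N d hAN n
    induction n with
    | zero => simp
    | succ n ih =>
      rw [pow_succ', mul_assoc, ih, ← mul_assoc, hAN, mul_assoc, ← pow_succ']
  have hdiagpow : ∀ (N : Matrix (Fin 3) (Fin 3) K) (d : Fin 3 → K),
      N.det ≠ 0 → Aval * N = N * Matrix.diagonal d → ∀ i, d i ^ q = 1 := by
    intro N d hNdet hAN i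
    have h := key N d hAN q
    rw [hAq, one_mul] at h
    have hNunit : IsUnit N.det := isUnit_iff_ne_zero.mpr hNdet
    have hDq : (Matrix.diagonal d) ^ q = 1 := by
      have := congrArg (fun X => N⁻¹ * X) h
      simp only [← mul_assoc, Matrix.nonsing_inv_mul N hNunit, one_mul] at this
      exact this.symm
    rw [Matrix.diagonal_pow] at hDq
    have := congrFun (congrFun hDq i) i
    simpa using this
  have hdq : ∀ i, d i ^ q = 1 := hdiagpow N d hNdet hAN
  have hd0 : ∀ i, d i ≠ 0 := by
    intro i h
    have := hdq i
    rw [h, zero_pow hq0.ne'] at this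
    exact zero_ne_one this
  -- if all eigenvalue ratios are n-th roots of unity then q ∣ n
  have hscal : ∀ n : ℕ, (∀ i, d i ^ n = d 0 ^ n) → q ∣ n := by
    intro n hn
    have hdd : Matrix.diagonal (d ^ n) = (d 0 ^ n) • (1 : Matrix (Fin 3) (Fin 3) K) := by
      ext i j
      by_cases h : i = j
      · subst h; simp [Matrix.diagonal_apply_eq, Matrix.one_apply_eq, hn i]
      · simp [Matrix.diagonal_apply_ne _ h, Matrix.one_apply_ne h]
    have hAn : Aval ^ n = (d 0 ^ n) • 1 := by
      have h := key N d hAN n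
      rw [Matrix.diagonal_pow, hdd, mul_smul_comm, mul_one] at h
      have hinv := Matrix.mul_nonsing_inv N (isUnit_iff_ne_zero.mpr hNdet)
      calc Aval ^ n = Aval ^ n * (N * N⁻¹) := by rw [hinv, mul_one]
        _ = (Aval ^ n * N) * N⁻¹ := by rw [mul_assoc]
        _ = ((d 0 ^ n) • N) * N⁻¹ := by rw [h]
        _ = (d 0 ^ n) • (N * N⁻¹) := by rw [smul_mul_assoc]
        _ = (d 0 ^ n) • 1 := by rw [hinv]
    have hcen : Aunit ^ n ∈ Subgroup.center (GL (Fin 3) K) := by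
      apply aux_scalar_mem_center (d 0 ^ n)
      rw [Units.val_pow_eq_pow_val, hAunitval, hAn]
    have hgn : g ^ n = 1 := by
      rw [← hgAunit]
      show ((QuotientGroup.mk' (Subgroup.center (GL (Fin 3) K))) Aunit) ^ n = 1
      rw [← map_pow]
      exact (QuotientGroup.eq_one_iff _).mpr hcen
    rw [← horder]
    exact orderOf_dvd_of_pow_eq_one hgn
  -- eigenvalue ratios
  have hratio : ∀ (x y : Fin 3) (n : ℕ), (d x * (d y)⁻¹) ^ n = 1 → d x ^ n = d y ^ n := by
    intro x y n h
    rw [mul_pow, inv_pow] at h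
    exact (mul_inv_eq_one₀ (pow_ne_zero _ (hd0 y))).mp h
  have hrootq : ∀ (x y : Fin 3), (d x * (d y)⁻¹) ^ q = 1 := by
    intro x y
    rw [mul_pow, inv_pow, hdq, hdq, inv_one, mul_one]
  set a : K := d 1 * (d 0)⁻¹ with ha
  set b : K := d 2 * (d 0)⁻¹ with hb
  have hdvd : q ∣ Nat.lcm (orderOf a) (orderOf b) := by
    apply hscal
    intro i
    fin_cases i
    · rfl
    · exact hratio 1 0 _ (orderOf_dvd_iff_pow_eq_one.mp (Nat.dvd_lcm_left _ _))
    · exact hratio 2 0 _ (orderOf_dvd_iff_pow_eq_one.mp (Nat.dvd_lcm_right _ _))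
  obtain ⟨i, hik, hoa⟩ := (Nat.dvd_prime_pow hp).mp (orderOf_dvd_of_pow_eq_one (hrootq 1 0))
  obtain ⟨j, hjk, hob⟩ := (Nat.dvd_prime_pow hp).mp (orderOf_dvd_of_pow_eq_one (hrootq 2 0))
  have hlcm_dvd : Nat.lcm (orderOf a) (orderOf b) ∣ p ^ (max i j) :=
    Nat.lcm_dvd (hoa ▸ pow_dvd_pow p (le_max_left i j))
      (hob ▸ pow_dvd_pow p (le_max_right i j))
  have hk_le : k ≤ max i j :=
    (Nat.pow_dvd_pow_iff_le_right hp.one_lt).mp (hdvd.trans hlcm_dvd)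
  have hor : orderOf a = q ∨ orderOf b = q := by
    rcases le_max_iff.mp hk_le with h | h
    · left; rw [hoa, hqdef]; congr 1; omega
    · right; rw [hob, hqdef]; congr 1; omega
  -- possibly swap the last two basis vectors so that the first ratio has order q
  obtain ⟨N', d', hN'det, hAN', hd'q, hd'0, hord⟩ :
      ∃ (N' : Matrix (Fin 3) (Fin 3) K) (d' : Fin 3 → K), N'.det ≠ 0 ∧
        Aval * N' = N' * Matrix.diagonal d' ∧ (∀ i, d' i ^ q = 1) ∧ (∀ i, d' i ≠ 0) ∧
        orderOf (d' 1 * (d' 0)⁻¹) = q := by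
    rcases hor with h | h
    · exact ⟨N, d, hNdet, hAN, hdq, hd0, h⟩
    · set S : Matrix (Fin 3) (Fin 3) K := Matrix.of ![![1,0,0],![0,0,1],![0,1,0]] with hS
      have hSdet : S.det = -1 := by
        rw [hS, Matrix.det_fin_three]
        simp
      have hswap : Matrix.diagonal d * S = S * Matrix.diagonal ![d 0, d 2, d 1] := by
        ext x y
        fin_cases x <;> fin_cases y <;>
          simp [hS, Matrix.mul_apply, Fin.sum_univ_three, Matrix.diagonal, Matrix.vecHead, Matrix.vecTail]
      refine ⟨N * S, ![d 0, d 2, d 1], ?_, ?_, ?_, ?_, ?_⟩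
      · rw [Matrix.det_mul, hSdet]
        simpa using hNdet
      · rw [← mul_assoc, hAN, mul_assoc, hswap, ← mul_assoc]
      · intro x; fin_cases x <;> simpa using hdq _
      · intro x; fin_cases x <;> simpa using hd0 _
      · simpa using h
  clear hAN hNdet hdq hd0 hdvd hor hscal hratio hrootq hoa hob hlcm_dvd hk_le hik hjk
  -- the primitive root and the exponent
  set ζ : K := d' 1 * (d' 0)⁻¹ with hζ
  have hζprim : IsPrimitiveRoot ζ q := by
    refine ⟨?_, ?_⟩
    · rw [← hord]; exact pow_orderOf_eq_one ζ
    · intro l hl; rw [← hord]; exact orderOf_dvd_of_pow_eq_one hl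
  set b' : K := d' 2 * (d' 0)⁻¹ with hb'
  have hb'q : b' ^ q = 1 := by
    rw [hb', mul_pow, inv_pow, hd'q, hd'q, inv_one, mul_one]
  obtain ⟨mm, hmmlt, hmm⟩ := hζprim.eq_pow_of_pow_eq_one hb'q
  have hζ0 : ζ ≠ 0 := fun h => by
    have := hζprim.pow_eq_one
    rw [h, zero_pow hq0.ne'] at this
    exact zero_ne_one this
  -- GL elements
  have hDdet : (Matrix.diagonal d').det ≠ 0 := by
    rw [Matrix.det_diagonal, Fin.prod_univ_three]
    exact mul_ne_zero (mul_ne_zero (hd'0 0) (hd'0 1)) (hd'0 2)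
  set Nu : GL (Fin 3) K := Matrix.GeneralLinearGroup.mkOfDetNeZero N' hN'det with hNu
  set Du : GL (Fin 3) K := Matrix.GeneralLinearGroup.mkOfDetNeZero (Matrix.diagonal d') hDdet
    with hDu
  have hNuval : (Nu : Matrix (Fin 3) (Fin 3) K) = N' := rfl
  have hDuval : (Du : Matrix (Fin 3) (Fin 3) K) = Matrix.diagonal d' := rfl
  have hcu : Aunit * Nu = Nu * Du := by
    apply Units.ext
    calc ((Aunit * Nu : GL (Fin 3) K) : Matrix (Fin 3) (Fin 3) K)
        = (Aunit : Matrix (Fin 3) (Fin 3) K) * (Nu : Matrix (Fin 3) (Fin 3) K) :=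
          Units.val_mul Aunit Nu
      _ = Aval * N' := by rw [hAunitval, hNuval]
      _ = N' * Matrix.diagonal d' := hAN'
      _ = (Nu : Matrix (Fin 3) (Fin 3) K) * (Du : Matrix (Fin 3) (Fin 3) K) := by
          rw [hNuval, hDuval]
      _ = ((Nu * Du : GL (Fin 3) K) : Matrix (Fin 3) (Fin 3) K) := (Units.val_mul Nu Du).symm
  set φ : PGL3 K := QuotientGroup.mk Nu with hφ
  have hconj : (MulAut.conj φ⁻¹) g = QuotientGroup.mk Du := by
    rw [MulAut.conj_apply, inv_inv, ← hgAunit]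
    have hred : Nu⁻¹ * Aunit * Nu = Du := by
      rw [mul_assoc, hcu, ← mul_assoc, inv_mul_cancel, one_mul]
    calc φ⁻¹ * (QuotientGroup.mk Aunit) * φ
        = QuotientGroup.mk (Nu⁻¹ * Aunit * Nu) := by
          rw [hφ]
          rw [← QuotientGroup.mk_inv, ← QuotientGroup.mk_mul, ← QuotientGroup.mk_mul]
      _ = QuotientGroup.mk Du := by rw [hred]
  -- identification of the diagonal class
  have hdet3 : (Matrix.diagonal ![(1:K), ζ, ζ ^ (mm:ℤ)]).det ≠ 0 := by
    rw [Matrix.det_diagonal, Fin.prod_univ_three]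
    simp only [Matrix.cons_val_zero, Matrix.cons_val_one, Matrix.head_cons,
      Matrix.cons_val_two, Matrix.tail_cons]
    exact mul_ne_zero (mul_ne_zero one_ne_zero hζ0) (zpow_ne_zero _ hζ0)
  have htp : toPGL3 (Matrix.diagonal ![(1:K), ζ, ζ ^ (mm:ℤ)]) = QuotientGroup.mk Du := by
    rw [toPGL3, dif_pos hdet3]
    apply aux_mk_eq_mk_of_smul _ _ (d' 0) (hd'0 0)
    rw [hDuval]
    have hvec : d' = d' 0 • ![(1:K), ζ, ζ ^ (mm:ℤ)] := by
      funext x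
      fin_cases x
      · simp
      · show d' 1 = d' 0 • ζ
        rw [hζ, smul_eq_mul, mul_comm (d' 0), mul_assoc, inv_mul_cancel₀ (hd'0 0), mul_one]
      · show d' 2 = d' 0 • ζ ^ (mm : ℤ)
        rw [zpow_natCast, hmm, hb', smul_eq_mul, mul_comm (d' 0), mul_assoc,
          inv_mul_cancel₀ (hd'0 0), mul_one]
    show Matrix.diagonal d'
        = d' 0 • (Matrix.diagonal ![(1:K), ζ, ζ ^ (mm:ℤ)])
    rw [← Matrix.diagonal_smul, ← hvec]
  refine ⟨φ, ζ, (mm : ℤ), hζprim, ?_⟩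
  rw [hGzp]
  rw [MonoidHom.map_zpowers]
  rw [← Subgroup.zpowers_eq_closure]
  congr 1
  show (MulAut.conj φ⁻¹) g = toPGL3 (Matrix.diagonal ![(1:K), ζ, ζ ^ (mm:ℤ)])
  rw [hconj, htp]
end
end

section
/- Let K be an algebraically closed field of characteristic 0 and ζ ∈ K a primitive cube root of unity. Let 𝒢₃ ⊆ PGL₃(K) be the cyclic subgroup generated by [diag(1,ζ,ζ²)], and let 𝒢₂,₂ ⊆ PGL₃(K) be the subgroup generated by [diag(1,−1,1)] and [diag(1,1,−1)]. Then the normalizer of 𝒢₃ in PGL₃(K) and the normalizer of 𝒢₂,₂ in PGL₃(K) are both equal to the subgroup of PGL₃(K) generated by the classes of the six 3×3 permutation matrices together with the classes of all invertible diagonal matrices (i.e., the classes of monomial matrices). -/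
open Matrix MvPolynomial
open scoped Classical

noncomputable section

namespace PGLAux

variable {K : Type*} [Field K]

lemma toPGL3_def (M : Matrix (Fin 3) (Fin 3) K) (h : M.det ≠ 0) :
    toPGL3 M = QuotientGroup.mk (Matrix.GeneralLinearGroup.mkOfDetNeZero M h) := dif_pos h

lemma det_val_ne_zero (M : GL (Fin 3) K) : (M : Matrix (Fin 3) (Fin 3) K).det ≠ 0 := by
  have h : ((M : Matrix (Fin 3) (Fin 3) K) * (↑M⁻¹ : Matrix (Fin 3) (Fin 3) K)).det = 1 := by
    rw [← Matrix.GeneralLinearGroup.coe_mul, mul_inv_cancel]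
    simp
  rw [Matrix.det_mul] at h
  exact left_ne_zero_of_mul_eq_one h

lemma mk_eq_toPGL3 (M : GL (Fin 3) K) :
    (QuotientGroup.mk M : PGL3 K) = toPGL3 (M : Matrix (Fin 3) (Fin 3) K) := by
  rw [toPGL3_def _ (det_val_ne_zero M)]
  congr 1
  exact Units.ext rfl

lemma mem_center_iff {M : GL (Fin 3) K} :
    M ∈ Subgroup.center (GL (Fin 3) K) ↔
      ∃ c : K, c ≠ 0 ∧ (M : Matrix (Fin 3) (Fin 3) K) = c • (1 : Matrix (Fin 3) (Fin 3) K) := by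
  constructor
  · intro hM
    rw [Subgroup.mem_center_iff] at hM
    have hcomm : ∀ t : Matrix.TransvectionStruct (Fin 3) K,
        Commute t.toMatrix (M : Matrix (Fin 3) (Fin 3) K) := by
      intro t
      have ht : t.toMatrix.det ≠ 0 := by rw [t.det]; exact one_ne_zero
      have := hM (Matrix.GeneralLinearGroup.mkOfDetNeZero t.toMatrix ht)
      have := congrArg Units.val this
      exact this
    obtain ⟨c, hc⟩ := Matrix.mem_range_scalar_of_commute_transvectionStruct hcomm
    refine ⟨c, ?_, ?_⟩
    · intro h0
      apply det_val_ne_zero M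
      rw [← hc, h0]
      simp [Matrix.scalar_apply]
    · rw [← hc, Matrix.scalar_apply, Matrix.smul_one_eq_diagonal]
  · rintro ⟨c, hc, hMc⟩
    rw [Subgroup.mem_center_iff]
    intro g
    refine Units.ext ?_
    show (g : Matrix (Fin 3) (Fin 3) K) * M = (M : Matrix (Fin 3) (Fin 3) K) * g
    rw [hMc, mul_smul_comm, smul_mul_assoc, mul_one, one_mul]

lemma toPGL3_eq_iff {A B : Matrix (Fin 3) (Fin 3) K} (hA : A.det ≠ 0) (hB : B.det ≠ 0) :
    toPGL3 A = toPGL3 B ↔ ∃ c : K, c ≠ 0 ∧ B = c • A := by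
  rw [toPGL3_def A hA, toPGL3_def B hB, QuotientGroup.eq]
  set uA := Matrix.GeneralLinearGroup.mkOfDetNeZero A hA with huA
  set uB := Matrix.GeneralLinearGroup.mkOfDetNeZero B hB with huB
  rw [mem_center_iff]
  constructor
  · rintro ⟨c, hc, hval⟩
    refine ⟨c, hc, ?_⟩
    have : uB = uA * (uA⁻¹ * uB) := by group
    have hv := congrArg Units.val this
    rw [Units.val_mul, hval] at hv
    rw [mul_smul_comm, mul_one] at hv
    exact hv
  · rintro ⟨c, hc, hBc⟩
    refine ⟨c, hc, ?_⟩
    have h1 : (↑uA⁻¹ : Matrix (Fin 3) (Fin 3) K) * A = 1 := by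
      exact congrArg Units.val (inv_mul_cancel uA)
    show (↑uA⁻¹ : Matrix (Fin 3) (Fin 3) K) * B = _
    rw [hBc, mul_smul_comm, h1]

lemma toPGL3_mul {A B : Matrix (Fin 3) (Fin 3) K} (hA : A.det ≠ 0) (hB : B.det ≠ 0) :
    toPGL3 (A * B) = toPGL3 A * toPGL3 B := by
  rw [toPGL3_def A hA, toPGL3_def B hB,
    toPGL3_def (A * B) (by rw [Matrix.det_mul]; exact mul_ne_zero hA hB),
    ← QuotientGroup.mk_mul]
  congr 1
  exact Units.ext rfl

lemma toPGL3_one : toPGL3 (1 : Matrix (Fin 3) (Fin 3) K) = 1 := by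
  rw [toPGL3_def 1 (by simp)]
  have : Matrix.GeneralLinearGroup.mkOfDetNeZero (1 : Matrix (Fin 3) (Fin 3) K) (by simp) = 1 :=
    Units.ext rfl
  rw [this, QuotientGroup.mk_one]


lemma toPGL3_smul {A : Matrix (Fin 3) (Fin 3) K} {c : K} (hc : c ≠ 0) (hA : A.det ≠ 0) :
    toPGL3 (c • A) = toPGL3 A :=
  ((toPGL3_eq_iff hA (by rw [Matrix.det_smul]; exact mul_ne_zero (pow_ne_zero _ hc) hA)).mpr
    ⟨c, hc, rfl⟩).symm

lemma toPGL3_inv_eq {A B : Matrix (Fin 3) (Fin 3) K} (hA : A.det ≠ 0) (hB : B.det ≠ 0)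
    (h : A * B = 1) : (toPGL3 A)⁻¹ = toPGL3 B := by
  apply inv_eq_of_mul_eq_one_right
  rw [← toPGL3_mul hA hB, h, toPGL3_one]

lemma conj_eq {A B C : Matrix (Fin 3) (Fin 3) K} (hA : A.det ≠ 0) (hB : B.det ≠ 0)
    (hC : C.det ≠ 0) (h : A * B = C * A) :
    toPGL3 A * toPGL3 B * (toPGL3 A)⁻¹ = toPGL3 C := by
  have := toPGL3_mul hA hB
  rw [h, toPGL3_mul hC hA] at this
  rw [← this]
  group

lemma det_diagonal_ne_zero {d : Fin 3 → K} (hd : ∀ i, d i ≠ 0) :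
    (Matrix.diagonal d).det ≠ 0 := by
  rw [Matrix.det_diagonal]
  exact Finset.prod_ne_zero_iff.mpr fun i _ => hd i

lemma det_permMatrix_ne_zero (σ : Equiv.Perm (Fin 3)) : (σ.permMatrix K).det ≠ 0 := by
  rw [Matrix.det_permutation]
  rcases Int.units_eq_one_or (Equiv.Perm.sign σ) with h | h <;> rw [h] <;> norm_num

lemma permMatrix_apply (σ : Equiv.Perm (Fin 3)) (i j : Fin 3) :
    σ.permMatrix K i j = if σ i = j then 1 else 0 := by
  simp [Equiv.Perm.permMatrix, PEquiv.toMatrix_apply, Equiv.toPEquiv_apply]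

lemma permMatrix_mul_diagonal (σ : Equiv.Perm (Fin 3)) (d : Fin 3 → K) :
    σ.permMatrix K * Matrix.diagonal d = Matrix.diagonal (d ∘ σ) * σ.permMatrix K := by
  ext i j
  rw [Matrix.mul_diagonal, Matrix.diagonal_mul, permMatrix_apply]
  by_cases h : σ i = j
  · subst h; simp
  · simp [h]

lemma permMatrix_mul_permMatrix_inv (σ : Equiv.Perm (Fin 3)) :
    σ.permMatrix K * (σ⁻¹).permMatrix K = 1 := by
  rw [Equiv.Perm.permMatrix, Equiv.Perm.permMatrix, ← PEquiv.toMatrix_trans,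
    ← Equiv.toPEquiv_trans]
  have : σ.trans σ⁻¹ = Equiv.refl (Fin 3) := Equiv.self_trans_symm σ
  rw [this, Equiv.toPEquiv_refl, PEquiv.toMatrix_refl]

lemma toPGL3_permMatrix_inv (σ : Equiv.Perm (Fin 3)) :
    (toPGL3 (σ.permMatrix K))⁻¹ = toPGL3 ((σ⁻¹).permMatrix K) :=
  toPGL3_inv_eq (det_permMatrix_ne_zero σ) (det_permMatrix_ne_zero σ⁻¹)
    (permMatrix_mul_permMatrix_inv σ)

lemma toPGL3_diag_mul (d e : Fin 3 → K) (hd : ∀ i, d i ≠ 0) (he : ∀ i, e i ≠ 0) :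
    toPGL3 (Matrix.diagonal d) * toPGL3 (Matrix.diagonal e)
      = toPGL3 (Matrix.diagonal (d * e)) := by
  rw [← toPGL3_mul (det_diagonal_ne_zero hd) (det_diagonal_ne_zero he),
    Matrix.diagonal_mul_diagonal]
  rfl

/-- The subgroup of `PGL3` consisting of classes of invertible diagonal matrices. -/
def diagSubgroup (K : Type*) [Field K] : Subgroup (PGL3 K) where
  carrier := {x | ∃ δ : Fin 3 → K, (∀ i, δ i ≠ 0) ∧ x = toPGL3 (Matrix.diagonal δ)}
  one_mem' := ⟨fun _ => 1, fun _ => one_ne_zero, by rw [Matrix.diagonal_one, toPGL3_one]⟩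
  mul_mem' := by
    rintro x y ⟨d, hd, rfl⟩ ⟨e, he, rfl⟩
    exact ⟨d * e, fun i => mul_ne_zero (hd i) (he i), toPGL3_diag_mul d e hd he⟩

  inv_mem' := by
    rintro x ⟨d, hd, rfl⟩
    refine ⟨fun i => (d i)⁻¹, fun i => inv_ne_zero (hd i), ?_⟩
    refine toPGL3_inv_eq (det_diagonal_ne_zero hd) ?_ ?_
    · exact det_diagonal_ne_zero fun i => inv_ne_zero (hd i)
    rw [Matrix.diagonal_mul_diagonal]
    have h1 : (fun i => d i * (d i)⁻¹) = fun _ => (1 : K) :=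
      funext fun i => mul_inv_cancel₀ (hd i)
    rw [h1]
    exact Matrix.diagonal_one

/-- Key structural lemma: a matrix with an "eigenvalue bookkeeping" relation is monomial. -/
lemma monomial {M : Matrix (Fin 3) (Fin 3) K} (hM : M.det ≠ 0)
    (e f ε φ : Fin 3 → K)
    (hinj : ∀ j j', e j = e j' → f j = f j' → j = j')
    (hrel : ∀ i j, M i j ≠ 0 → e j = ε i ∧ f j = φ i) :
    ∃ (σ : Equiv.Perm (Fin 3)) (d : Fin 3 → K), (∀ j, d j ≠ 0) ∧
      M = σ.permMatrix K * Matrix.diagonal d := by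
  have hcol : ∀ j, ∃ i, M i j ≠ 0 := by
    intro j
    by_contra h
    push_neg at h
    exact hM (Matrix.det_eq_zero_of_column_eq_zero j h)
  choose s hs using hcol
  have hsinj : Function.Injective s := by
    intro j j' hss
    obtain ⟨h1, h2⟩ := hrel _ _ (hs j)
    obtain ⟨h1', h2'⟩ := hrel _ _ (hs j')
    exact hinj j j' (by rw [h1, hss, ← h1']) (by rw [h2, hss, ← h2'])
  let τ : Equiv.Perm (Fin 3) := Equiv.ofBijective s (Finite.injective_iff_bijective.mp hsinj)
  have hτ : ∀ j, τ j = s j := fun j => rfl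
  have key : ∀ i j, M i j ≠ 0 → i = s j := by
    intro i j hij
    obtain ⟨h1, h2⟩ := hrel _ _ hij
    have hi : s (τ.symm i) = i := by rw [← hτ]; exact τ.apply_symm_apply i
    obtain ⟨g1, g2⟩ := hrel _ _ (hs (τ.symm i))
    rw [hi] at g1 g2
    have hj : j = τ.symm i := hinj j (τ.symm i) (h1.trans g1.symm) (h2.trans g2.symm)
    rw [hj, hi]
  refine ⟨τ.symm, fun j => M (s j) j, fun j => hs j, ?_⟩
  ext i j
  rw [Matrix.mul_diagonal, permMatrix_apply]
  by_cases h : i = s j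
  · subst h
    have : τ.symm (s j) = j := by rw [← hτ]; exact τ.symm_apply_apply j
    rw [this]
    simp
  · have h0 : M i j = 0 := by
      by_contra hne
      exact h (key i j hne)
    have : τ.symm i ≠ j := by
      intro hc
      apply h
      rw [← hτ j, ← hc]
      exact (τ.apply_symm_apply i).symm
    rw [h0, if_neg this, zero_mul]


lemma conj_mem_closure_of_gen {G : Type*} [Group G] (y : G) (T : Set G)
    (hy : ∀ t ∈ T, y * t * y⁻¹ ∈ Subgroup.closure T) :
    ∀ h ∈ Subgroup.closure T, y * h * y⁻¹ ∈ Subgroup.closure T := by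
  intro h hh
  induction hh using Subgroup.closure_induction with
  | mem t ht => exact hy t ht
  | one => simpa using one_mem _
  | mul a b _ _ ha hb =>
    have : y * (a * b) * y⁻¹ = (y * a * y⁻¹) * (y * b * y⁻¹) := by group
    rw [this]
    exact mul_mem ha hb
  | inv a _ ha =>
    have : y * a⁻¹ * y⁻¹ = (y * a * y⁻¹)⁻¹ := by group
    rw [this]
    exact inv_mem ha

lemma mem_normalizer_of_conj {G : Type*} [Group G] (x : G) (T : Set G)
    (h1 : ∀ t ∈ T, x * t * x⁻¹ ∈ Subgroup.closure T)
    (h2 : ∀ t ∈ T, x⁻¹ * t * x ∈ Subgroup.closure T) :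
    x ∈ Subgroup.normalizer (Subgroup.closure T : Set G) := by
  rw [Subgroup.mem_normalizer_iff]
  intro h
  constructor
  · exact fun hh => conj_mem_closure_of_gen x T h1 h hh
  · intro hh
    have h2' : ∀ t ∈ T, x⁻¹ * t * x⁻¹⁻¹ ∈ Subgroup.closure T := by
      simpa [inv_inv] using h2
    have := conj_mem_closure_of_gen x⁻¹ T h2' _ hh
    have heq : x⁻¹ * (x * h * x⁻¹) * x⁻¹⁻¹ = h := by group
    rwa [heq] at this


lemma N_le_normalizer (T : Set (PGL3 K))
    (hT : ∀ t ∈ T, ∃ e : Fin 3 → K, (∀ i, e i ≠ 0) ∧ t = toPGL3 (Matrix.diagonal e) ∧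
      ∀ σ : Equiv.Perm (Fin 3), toPGL3 (Matrix.diagonal (e ∘ σ)) ∈ Subgroup.closure T) :
    Subgroup.closure
        ((Set.range fun σ : Equiv.Perm (Fin 3) => toPGL3 (σ.permMatrix K)) ∪
          {x | ∃ d : Fin 3 → K, (∀ i, d i ≠ 0) ∧ x = toPGL3 (Matrix.diagonal d)}) ≤
      Subgroup.normalizer (Subgroup.closure T : Set (PGL3 K)) := by
  rw [Subgroup.closure_le]
  rintro x (⟨σ, rfl⟩ | ⟨d, hd, rfl⟩)
  · have conj : ∀ π : Equiv.Perm (Fin 3), ∀ t ∈ T,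
        toPGL3 (π.permMatrix K) * t * (toPGL3 (π.permMatrix K))⁻¹ ∈ Subgroup.closure T := by
      intro π t ht
      obtain ⟨e, he, rfl, hstab⟩ := hT t ht
      rw [conj_eq (det_permMatrix_ne_zero π) (det_diagonal_ne_zero he)
        (det_diagonal_ne_zero (fun i => he (π i))) (permMatrix_mul_diagonal π e)]
      exact hstab π
    apply mem_normalizer_of_conj
    · exact conj σ
    · intro t ht
      have h := conj σ⁻¹ t ht
      rw [toPGL3_permMatrix_inv σ⁻¹, inv_inv] at h
      rw [toPGL3_permMatrix_inv σ]
      exact h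
  · have key : ∀ t ∈ T, toPGL3 (Matrix.diagonal d) * t = t * toPGL3 (Matrix.diagonal d) := by
      intro t ht
      obtain ⟨e, he, rfl, -⟩ := hT t ht
      rw [toPGL3_diag_mul d e hd he, toPGL3_diag_mul e d he hd, mul_comm d e]
    apply mem_normalizer_of_conj
    · intro t ht
      rw [key t ht, mul_inv_cancel_right]
      exact Subgroup.subset_closure ht
    · intro t ht
      have hc : Commute (toPGL3 (Matrix.diagonal d)) t := key t ht
      rw [(hc.inv_left.eq : (toPGL3 (Matrix.diagonal d))⁻¹ * t = _), mul_assoc,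
        inv_mul_cancel, mul_one]
      exact Subgroup.subset_closure ht

lemma normalizer_le_N (H : Subgroup (PGL3 K)) (α β : Fin 3 → K)
    (hpair : ∀ j j', α j = α j' → β j = β j' → j = j')
    (hα : ∀ i, α i ≠ 0) (hβ : ∀ i, β i ≠ 0)
    (haH : toPGL3 (Matrix.diagonal α) ∈ H) (hbH : toPGL3 (Matrix.diagonal β) ∈ H)
    (hdiag : H ≤ diagSubgroup K) :
    Subgroup.normalizer (H : Set (PGL3 K)) ≤
      Subgroup.closure
        ((Set.range fun σ : Equiv.Perm (Fin 3) => toPGL3 (σ.permMatrix K)) ∪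
          {x | ∃ d : Fin 3 → K, (∀ i, d i ≠ 0) ∧ x = toPGL3 (Matrix.diagonal d)}) := by
  intro x hx
  obtain ⟨M, rfl⟩ := QuotientGroup.mk_surjective x
  rw [Subgroup.mem_normalizer_iff] at hx
  obtain ⟨δ, hδ, hδeq⟩ := hdiag ((hx (toPGL3 (Matrix.diagonal α))).mp haH)
  obtain ⟨δ', hδ', hδ'eq⟩ := hdiag ((hx (toPGL3 (Matrix.diagonal β))).mp hbH)
  set Mv := (M : Matrix (Fin 3) (Fin 3) K) with hMv
  have hMdet : Mv.det ≠ 0 := det_val_ne_zero M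
  have step : ∀ (γ : Fin 3 → K), (∀ i, γ i ≠ 0) → ∀ (ρ : Fin 3 → K), (∀ i, ρ i ≠ 0) →
      (QuotientGroup.mk M : PGL3 K) * toPGL3 (Matrix.diagonal γ)
        * (QuotientGroup.mk M : PGL3 K)⁻¹ = toPGL3 (Matrix.diagonal ρ) →
      ∃ c : K, c ≠ 0 ∧ ∀ i j, Mv i j ≠ 0 → c * γ j = ρ i := by
    intro γ hγ ρ hρ heq
    have h1 : (QuotientGroup.mk M : PGL3 K) * toPGL3 (Matrix.diagonal γ)
        = toPGL3 (Matrix.diagonal ρ) * (QuotientGroup.mk M : PGL3 K) :=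
      mul_inv_eq_iff_eq_mul.mp heq
    rw [mk_eq_toPGL3, ← hMv, ← toPGL3_mul hMdet (det_diagonal_ne_zero hγ),
      ← toPGL3_mul (det_diagonal_ne_zero hρ) hMdet] at h1
    have hd1 : (Mv * Matrix.diagonal γ).det ≠ 0 := by
      rw [Matrix.det_mul]; exact mul_ne_zero hMdet (det_diagonal_ne_zero hγ)
    have hd2 : (Matrix.diagonal ρ * Mv).det ≠ 0 := by
      rw [Matrix.det_mul]; exact mul_ne_zero (det_diagonal_ne_zero hρ) hMdet
    obtain ⟨c, hc, hceq⟩ := (toPGL3_eq_iff hd1 hd2).mp h1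
    refine ⟨c, hc, fun i j hij => ?_⟩
    have := Matrix.ext_iff.mpr hceq i j
    rw [Matrix.diagonal_mul, Matrix.smul_apply, Matrix.mul_diagonal, smul_eq_mul] at this
    have h2 : ρ i * Mv i j = (c * γ j) * Mv i j := by rw [this]; ring
    exact (mul_right_cancel₀ hij h2).symm
  obtain ⟨c, hc, hrelα⟩ := step α hα δ hδ hδeq
  obtain ⟨c', hc', hrelβ⟩ := step β hβ δ' hδ' hδ'eq
  obtain ⟨σ, d, hdne, hMeq⟩ := monomial hMdet (fun j => c * α j) (fun j => c' * β j) δ δ'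
    (fun j j' h1 h2 => hpair j j' (mul_left_cancel₀ hc h1) (mul_left_cancel₀ hc' h2))
    (fun i j hij => ⟨(hrelα i j hij).symm ▸ rfl, (hrelβ i j hij).symm ▸ rfl⟩)
  rw [mk_eq_toPGL3, ← hMv, hMeq,
    toPGL3_mul (det_permMatrix_ne_zero σ) (det_diagonal_ne_zero hdne)]
  exact mul_mem
    (Subgroup.subset_closure (Or.inl ⟨σ, rfl⟩))
    (Subgroup.subset_closure (Or.inr ⟨d, hdne, rfl⟩))


lemma diag_mem_G22 (e : Fin 3 → K) (hpm : ∀ i, e i = 1 ∨ e i = -1) :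
    toPGL3 (Matrix.diagonal e) ∈ Subgroup.closure
      {toPGL3 (Matrix.diagonal ![(1 : K), -1, 1]), toPGL3 (Matrix.diagonal ![(1 : K), 1, -1])} := by
  have he0 : ∀ i, e i ≠ 0 := by
    intro i; rcases hpm i with h | h <;> rw [h] <;> norm_num
  have hsq : e 0 * e 0 = 1 := by rcases hpm 0 with h | h <;> rw [h] <;> norm_num
  set u : Fin 3 → K := fun k => e 0 * e k with hu_def
  have hu0 : u 0 = 1 := hsq
  have hune : ∀ k, u k ≠ 0 := fun k => mul_ne_zero (he0 0) (he0 k)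
  have hupm : ∀ k, u k = 1 ∨ u k = -1 := by
    intro k
    rcases hpm 0 with h0 | h0 <;> rcases hpm k with hk | hk <;>
      simp [hu_def, h0, hk]
  have hfun : e = e 0 • u := by
    funext k
    show e k = e 0 * (e 0 * e k)
    rw [← mul_assoc, hsq, one_mul]
  have hdecomp : Matrix.diagonal e = e 0 • Matrix.diagonal u := by
    rw [← Matrix.diagonal_smul]
    exact congrArg Matrix.diagonal hfun
  rw [hdecomp, toPGL3_smul (he0 0) (det_diagonal_ne_zero hune)]
  have hg1 : toPGL3 (Matrix.diagonal ![(1 : K), -1, 1]) ∈ Subgroup.closure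
      {toPGL3 (Matrix.diagonal ![(1 : K), -1, 1]), toPGL3 (Matrix.diagonal ![(1 : K), 1, -1])} :=
    Subgroup.subset_closure (Set.mem_insert _ _)
  have hg2 : toPGL3 (Matrix.diagonal ![(1 : K), 1, -1]) ∈ Subgroup.closure
      {toPGL3 (Matrix.diagonal ![(1 : K), -1, 1]), toPGL3 (Matrix.diagonal ![(1 : K), 1, -1])} :=
    Subgroup.subset_closure (Set.mem_insert_of_mem _ rfl)
  rcases hupm 1 with h1 | h1 <;> rcases hupm 2 with h2 | h2
  · have : u = fun _ => (1 : K) := by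
      funext k; fin_cases k
      · exact hu0
      · exact h1
      · exact h2
    rw [this, Matrix.diagonal_one, toPGL3_one]
    exact one_mem _
  · have : u = ![(1 : K), 1, -1] := by
      funext k; fin_cases k
      · exact hu0
      · exact h1
      · exact h2
    rw [this]; exact hg2
  · have : u = ![(1 : K), -1, 1] := by
      funext k; fin_cases k
      · exact hu0
      · exact h1
      · exact h2
    rw [this]; exact hg1
  · have hprod : toPGL3 (Matrix.diagonal u) =
        toPGL3 (Matrix.diagonal ![(1 : K), -1, 1]) * toPGL3 (Matrix.diagonal ![(1 : K), 1, -1]) := by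
      have hmulfun : (![(1 : K), -1, 1] * ![(1 : K), 1, -1]) = u := by
        funext k; fin_cases k
        · show (1 : K) * 1 = u 0
          rw [hu0]; norm_num
        · show (-1 : K) * 1 = u 1
          rw [h1]; norm_num
        · show (1 : K) * -1 = u 2
          rw [h2]; norm_num
      rw [toPGL3_diag_mul (![(1 : K), -1, 1]) (![(1 : K), 1, -1])
        (by intro i; fin_cases i <;> norm_num) (by intro i; fin_cases i <;> norm_num), hmulfun]
    rw [hprod]
    exact mul_mem hg1 hg2


lemma diag_mem_G3 {ζ : K} (hζ : IsPrimitiveRoot ζ 3) (e : Fin 3 → K)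
    (hcube : ∀ i, e i ^ 3 = 1) (hinj : Function.Injective e) :
    toPGL3 (Matrix.diagonal e) ∈
      Subgroup.closure {toPGL3 (Matrix.diagonal ![(1 : K), ζ, ζ ^ 2])} := by
  have hζ3 : ζ ^ 3 = 1 := hζ.pow_eq_one
  have hζ0 : ζ ≠ 0 := fun h => by rw [h] at hζ3; norm_num at hζ3
  have he0 : ∀ i, e i ≠ 0 := fun i h => by
    have := hcube i; rw [h] at this; norm_num at this
  have hαne : ∀ idx, ![(1 : K), ζ, ζ ^ 2] idx ≠ 0 := by
    intro idx; fin_cases idx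
    · norm_num
    · exact hζ0
    · exact pow_ne_zero 2 hζ0
  have hg : toPGL3 (Matrix.diagonal ![(1 : K), ζ, ζ ^ 2]) ∈
      Subgroup.closure {toPGL3 (Matrix.diagonal ![(1 : K), ζ, ζ ^ 2])} :=
    Subgroup.subset_closure rfl
  set a := e 1 * (e 0)⁻¹ with ha_def
  set b := e 2 * (e 0)⁻¹ with hb_def
  have ha3 : a ^ 3 = 1 := by rw [ha_def, mul_pow, inv_pow, hcube 1, hcube 0]; norm_num
  have hb3 : b ^ 3 = 1 := by rw [hb_def, mul_pow, inv_pow, hcube 2, hcube 0]; norm_num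
  obtain ⟨i, hi3, hieq⟩ := hζ.eq_pow_of_pow_eq_one ha3
  obtain ⟨j, hj3, hjeq⟩ := hζ.eq_pow_of_pow_eq_one hb3
  have hane : a ≠ 1 := by
    intro h
    rw [ha_def, mul_inv_eq_one₀ (he0 0)] at h
    exact (by decide : (1 : Fin 3) ≠ 0) (hinj h)
  have hbne : b ≠ 1 := by
    intro h
    rw [hb_def, mul_inv_eq_one₀ (he0 0)] at h
    exact (by decide : (2 : Fin 3) ≠ 0) (hinj h)
  have hab : a ≠ b := by
    intro h
    rw [ha_def, hb_def] at h
    exact (by decide : (1 : Fin 3) ≠ 2) (hinj (mul_right_cancel₀ (inv_ne_zero (he0 0)) h))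
  have hi0 : i ≠ 0 := by rintro rfl; rw [pow_zero] at hieq; exact hane hieq.symm
  have hj0 : j ≠ 0 := by rintro rfl; rw [pow_zero] at hjeq; exact hbne hjeq.symm
  have hij : i ≠ j := by rintro rfl; exact hab (hieq.symm.trans hjeq)
  have he1 : e 1 = e 0 * a := by
    rw [ha_def, mul_comm (e 1), ← mul_assoc, mul_inv_cancel₀ (he0 0), one_mul]
  have he2 : e 2 = e 0 * b := by
    rw [hb_def, mul_comm (e 2), ← mul_assoc, mul_inv_cancel₀ (he0 0), one_mul]
  have hi12 : i = 1 ∨ i = 2 := by omega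
  have hj12 : j = 1 ∨ j = 2 := by omega
  rcases hi12 with rfl | rfl <;> rcases hj12 with rfl | rfl
  · exact absurd rfl hij
  · -- i = 1, j = 2 : e = e 0 • ![1, ζ, ζ^2]
    have hfun : e = e 0 • ![(1 : K), ζ, ζ ^ 2] := by
      funext k; fin_cases k
      · show e 0 = e 0 * 1
        rw [mul_one]
      · show e 1 = e 0 * ζ
        rw [he1, ← hieq, pow_one]
      · show e 2 = e 0 * ζ ^ 2
        rw [he2, ← hjeq]
    rw [hfun, Matrix.diagonal_smul, toPGL3_smul (he0 0) (det_diagonal_ne_zero hαne)]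
    exact hg
  · -- i = 2, j = 1 : e = e 0 • (α * α)
    have hprodfun : (![(1 : K), ζ, ζ ^ 2] * ![(1 : K), ζ, ζ ^ 2]) = ![(1 : K), ζ ^ 2, ζ] := by
      funext k; fin_cases k
      · show (1 : K) * 1 = 1
        rw [mul_one]
      · show ζ * ζ = ζ ^ 2
        ring
      · show ζ ^ 2 * ζ ^ 2 = ζ
        have h4 : ζ ^ 2 * ζ ^ 2 = ζ ^ 3 * ζ := by ring
        rw [h4, hζ3, one_mul]
    have hfun : e = e 0 • ![(1 : K), ζ ^ 2, ζ] := by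
      funext k; fin_cases k
      · show e 0 = e 0 * 1
        rw [mul_one]
      · show e 1 = e 0 * ζ ^ 2
        rw [he1, ← hieq]
      · show e 2 = e 0 * ζ
        rw [he2, ← hjeq, pow_one]
    have hα2ne : ∀ idx, ![(1 : K), ζ ^ 2, ζ] idx ≠ 0 := by
      intro idx; fin_cases idx
      · norm_num
      · exact pow_ne_zero 2 hζ0
      · exact hζ0
    rw [hfun, Matrix.diagonal_smul, toPGL3_smul (he0 0) (det_diagonal_ne_zero hα2ne),
      ← hprodfun, ← toPGL3_diag_mul _ _ hαne hαne]
    exact mul_mem hg hg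
  · exact absurd rfl hij

end PGLAux

theorem stmt3 {K : Type*} [Field K] [IsAlgClosed K] [CharZero K]
    (ζ : K) (hζ : IsPrimitiveRoot ζ 3) :
    let G3 : Subgroup (PGL3 K) :=
      Subgroup.closure {toPGL3 (Matrix.diagonal ![1, ζ, ζ ^ 2])}
    let G22 : Subgroup (PGL3 K) :=
      Subgroup.closure {toPGL3 (Matrix.diagonal ![1, -1, 1]),
        toPGL3 (Matrix.diagonal ![1, 1, -1])}
    let N : Subgroup (PGL3 K) :=
      Subgroup.closure
        ((Set.range fun σ : Equiv.Perm (Fin 3) => toPGL3 (σ.permMatrix K)) ∪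
          {x | ∃ d : Fin 3 → K, (∀ i, d i ≠ 0) ∧ x = toPGL3 (Matrix.diagonal d)})
    Subgroup.normalizer (G3 : Set (PGL3 K)) = N ∧ Subgroup.normalizer (G22 : Set (PGL3 K)) = N := by
  intro G3 G22 N
  have hζ3 : ζ ^ 3 = 1 := hζ.pow_eq_one
  have hζ0 : ζ ≠ 0 := fun h => by rw [h] at hζ3; norm_num at hζ3
  have hζ1 : ζ ≠ 1 := hζ.ne_one (by norm_num)
  have hζ21 : ζ ^ 2 ≠ 1 := hζ.pow_ne_one_of_pos_of_lt (by norm_num) (by norm_num)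
  have hζζ2 : ζ ≠ ζ ^ 2 := by
    intro h
    have h' : ζ * 1 = ζ * ζ := by rw [mul_one]; nth_rewrite 1 [h]; ring
    exact hζ1 (mul_left_cancel₀ hζ0 h').symm
  have hα : ∀ i, ![(1 : K), ζ, ζ ^ 2] i ≠ 0 := by
    intro i; fin_cases i
    · norm_num
    · exact hζ0
    · exact pow_ne_zero 2 hζ0
  have hαinj : Function.Injective ![(1 : K), ζ, ζ ^ 2] := by
    intro j j'
    fin_cases j <;> fin_cases j' <;> intro h
    · rfl
    · exact absurd h (Ne.symm hζ1)
    · exact absurd h (Ne.symm hζ21)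
    · exact absurd h hζ1
    · rfl
    · exact absurd h hζζ2
    · exact absurd h hζ21
    · exact absurd h (Ne.symm hζζ2)
    · rfl
  have hone_ne : (1 : K) ≠ -1 := by norm_num
  have hA : ∀ i, ![(1 : K), -1, 1] i ≠ 0 := by
    intro i; fin_cases i <;> norm_num
  have hB : ∀ i, ![(1 : K), 1, -1] i ≠ 0 := by
    intro i; fin_cases i <;> norm_num
  have hApm : ∀ k, ![(1 : K), -1, 1] k = 1 ∨ ![(1 : K), -1, 1] k = -1 := by
    intro k; fin_cases k
    · left; rfl
    · right; rfl
    · left; rfl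
  have hBpm : ∀ k, ![(1 : K), 1, -1] k = 1 ∨ ![(1 : K), 1, -1] k = -1 := by
    intro k; fin_cases k
    · left; rfl
    · left; rfl
    · right; rfl
  have hcube : ∀ k : Fin 3, ![(1 : K), ζ, ζ ^ 2] k ^ 3 = 1 := by
    intro k; fin_cases k
    · norm_num
    · exact hζ3
    · show (ζ ^ 2) ^ 3 = 1
      rw [← pow_mul, mul_comm, pow_mul, hζ3, one_pow]
  constructor
  · -- G3
    apply le_antisymm
    · refine PGLAux.normalizer_le_N G3 (![(1 : K), ζ, ζ ^ 2]) (![(1 : K), ζ, ζ ^ 2])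
        (fun j j' h _ => hαinj h) hα hα ?_ ?_ ?_
      · exact Subgroup.subset_closure rfl
      · exact Subgroup.subset_closure rfl
      · exact (Subgroup.closure_le _).mpr
          (Set.singleton_subset_iff.mpr ⟨![(1 : K), ζ, ζ ^ 2], hα, rfl⟩)
    · refine PGLAux.N_le_normalizer _ ?_
      rintro t ht
      rw [Set.mem_singleton_iff] at ht
      subst ht
      refine ⟨![(1 : K), ζ, ζ ^ 2], hα, rfl, fun σ => ?_⟩
      exact PGLAux.diag_mem_G3 hζ (![(1 : K), ζ, ζ ^ 2] ∘ σ)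
        (fun i => hcube (σ i)) (hαinj.comp σ.injective)
  · -- G22
    apply le_antisymm
    · refine PGLAux.normalizer_le_N G22 (![(1 : K), -1, 1]) (![(1 : K), 1, -1])
        ?_ hA hB ?_ ?_ ?_
      · intro j j' h1 h2
        fin_cases j <;> fin_cases j'
        · rfl
        · exact absurd h1 hone_ne
        · exact absurd h2 hone_ne
        · exact absurd h1 (Ne.symm hone_ne)
        · rfl
        · exact absurd h1 (Ne.symm hone_ne)
        · exact absurd h2 (Ne.symm hone_ne)
        · exact absurd h1 hone_ne
        · rfl
      · exact Subgroup.subset_closure (Set.mem_insert _ _)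
      · exact Subgroup.subset_closure (Set.mem_insert_of_mem _ rfl)
      · refine (Subgroup.closure_le _).mpr ?_
        rintro t ht
        rw [Set.mem_insert_iff, Set.mem_singleton_iff] at ht
        rcases ht with rfl | rfl
        · exact ⟨![(1 : K), -1, 1], hA, rfl⟩
        · exact ⟨![(1 : K), 1, -1], hB, rfl⟩
    · refine PGLAux.N_le_normalizer _ ?_
      rintro t ht
      rw [Set.mem_insert_iff, Set.mem_singleton_iff] at ht
      rcases ht with rfl | rfl
      · refine ⟨![(1 : K), -1, 1], hA, rfl, fun σ => ?_⟩
        exact PGLAux.diag_mem_G22 (![(1 : K), -1, 1] ∘ σ) (fun k => hApm (σ k))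
      · refine ⟨![(1 : K), 1, -1], hB, rfl, fun σ => ?_⟩
        exact PGLAux.diag_mem_G22 (![(1 : K), 1, -1] ∘ σ) (fun k => hBpm (σ k))
end
end

section
/- Let K be an algebraically closed field of characteristic 0, let i ∈ K be a primitive 4th root of unity, ζ₅ ∈ K a primitive 5th root of unity, and ζ₇ ∈ K a primitive 7th root of unity. Let 𝒢₄, 𝒢₅, 𝒢₇ ⊆ PGL₃(K) be the cyclic subgroups generated by [diag(1,i,−1)], [diag(1,ζ₅,ζ₅³)], and [diag(1,ζ₇,ζ₇³)] respectively. Then: the normalizer of 𝒢₄ in PGL₃(K) is the subgroup generated by the classes of all invertible diagonal matrices together with the class of the permutation matrix exchanging the first and third standard basis vectors; the normalizer of 𝒢₅ is the subgroup generated by the classes of all invertible diagonal matrices together with the class of the permutation matrix exchanging the first and second standard basis vectors; and the normalizer of 𝒢₇ is the subgroup generated by the classes of all invertible diagonal matrices together with the class of the permutation matrix with rows (0,1,0), (0,0,1), (1,0,0). -/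
open Matrix MvPolynomial
open scoped Classical

noncomputable section

section Aux
variable {K : Type*} [Field K]

lemma center_GL3_iff (U : GL (Fin 3) K) :
    U ∈ Subgroup.center (GL (Fin 3) K) ↔
      ∃ c : K, c ≠ 0 ∧ (U : Matrix (Fin 3) (Fin 3) K) = c • 1 := by
  constructor
  · intro hU
    have hcomm : Pairwise fun p q : Fin 3 =>
        Commute (Matrix.single p q 1) (U : Matrix (Fin 3) (Fin 3) K) := by
      intro p q hpq
      set E : Matrix (Fin 3) (Fin 3) K := Matrix.single p q 1 with hE
      have hE2 : E * E = 0 := Matrix.single_mul_single_of_ne (c := (1 : K)) (i := p) (j := q) (k := p) (h := Ne.symm hpq) (d := 1)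
      have h1 : (1 + E) * (1 - E) = 1 := by
        have : (1 + E) * (1 - E) = 1 - E * E := by noncomm_ring
        rw [this, hE2, sub_zero]
      have h2 : (1 - E) * (1 + E) = 1 := by
        have : (1 - E) * (1 + E) = 1 - E * E := by noncomm_ring
        rw [this, hE2, sub_zero]
      set V : GL (Fin 3) K := ⟨1 + E, 1 - E, h1, h2⟩ with hV
      have := (Subgroup.mem_center_iff.mp hU V)
      have hval : (1 + E) * (U : Matrix (Fin 3) (Fin 3) K)
          = (U : Matrix (Fin 3) (Fin 3) K) * (1 + E) := by
        have := congrArg Units.val this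
        simpa [Units.val_mul, hV] using this
      have : E * (U : Matrix (Fin 3) (Fin 3) K) = (U : Matrix (Fin 3) (Fin 3) K) * E := by
        have h' := hval
        rw [add_mul, mul_add, one_mul, mul_one] at h'
        exact add_left_cancel h'
      exact this
    obtain ⟨r, hr⟩ := Matrix.mem_range_scalar_of_commute_single hcomm
    refine ⟨r, ?_, ?_⟩
    · intro hr0
      have hz : (U : Matrix (Fin 3) (Fin 3) K) = 0 := by
        rw [← hr, hr0]; simp
      have h1 : (U : Matrix (Fin 3) (Fin 3) K) * ((U⁻¹ : GL (Fin 3) K) : Matrix (Fin 3) (Fin 3) K) = 1 := by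
        have h1' := congrArg Units.val (mul_inv_cancel U)
        rw [Units.val_mul] at h1'
        exact h1'
      rw [hz, zero_mul] at h1
      have := congrFun (congrFun h1 0) 0
      simp at this
    · rw [← hr]
      rw [Matrix.scalar_apply]
      ext a b
      simp [Matrix.diagonal_apply, Matrix.one_apply]
  · rintro ⟨c, hc, hU⟩
    rw [Subgroup.mem_center_iff]
    intro V
    apply Units.ext
    simp only [Units.val_mul, hU]
    rw [Matrix.mul_smul, Matrix.smul_mul, mul_one, one_mul]

lemma mk_eq_mk_iff (U V : GL (Fin 3) K) :
    (QuotientGroup.mk U : PGL3 K) = QuotientGroup.mk V ↔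
      ∃ c : K, c ≠ 0 ∧ (V : Matrix (Fin 3) (Fin 3) K) = c • (U : Matrix (Fin 3) (Fin 3) K) := by
  rw [QuotientGroup.eq, center_GL3_iff]
  constructor
  · rintro ⟨c, hc, h⟩
    refine ⟨c, hc, ?_⟩
    have h2 : (U : Matrix (Fin 3) (Fin 3) K) * ((U⁻¹ * V : GL (Fin 3) K) : Matrix _ _ K)
        = (U : Matrix _ _ K) * (c • (1 : Matrix (Fin 3) (Fin 3) K)) := by rw [h]
    have h3 : ((U * (U⁻¹ * V) : GL (Fin 3) K) : Matrix (Fin 3) (Fin 3) K)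
        = c • (U : Matrix _ _ K) := by
      rw [Units.val_mul, h2, Matrix.mul_smul, mul_one]
    rw [← mul_assoc, mul_inv_cancel, one_mul] at h3
    exact h3
  · rintro ⟨c, hc, h⟩
    refine ⟨c, hc, ?_⟩
    rw [Units.val_mul, h, Matrix.mul_smul]
    have : ((U⁻¹ : GL (Fin 3) K) : Matrix (Fin 3) (Fin 3) K) * (U : Matrix _ _ K) = 1 := by
      have h1' := congrArg Units.val (inv_mul_cancel U)
      rw [Units.val_mul] at h1'
      exact h1'
    rw [this]

lemma toPGL3_coe (U : GL (Fin 3) K) :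
    toPGL3 ((U : Matrix (Fin 3) (Fin 3) K)) = QuotientGroup.mk U := by
  have hdet : ((U : Matrix (Fin 3) (Fin 3) K)).det ≠ 0 := by
    have : IsUnit ((U : Matrix (Fin 3) (Fin 3) K)).det :=
      (Matrix.isUnit_iff_isUnit_det _).mp U.isUnit
    exact this.ne_zero
  rw [toPGL3, dif_pos hdet]
  congr 1
  exact Units.ext rfl

lemma toPGL3_eq_iff {A B : Matrix (Fin 3) (Fin 3) K} (hA : A.det ≠ 0) (hB : B.det ≠ 0) :
    toPGL3 A = toPGL3 B ↔ ∃ c : K, c ≠ 0 ∧ B = c • A := by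
  rw [toPGL3, toPGL3, dif_pos hA, dif_pos hB, mk_eq_mk_iff]
  exact Iff.rfl

lemma toPGL3_mul {A B : Matrix (Fin 3) (Fin 3) K} (hA : A.det ≠ 0) (hB : B.det ≠ 0) :
    toPGL3 (A * B) = toPGL3 A * toPGL3 B := by
  have hAB : (A * B).det ≠ 0 := by rw [Matrix.det_mul]; exact mul_ne_zero hA hB
  rw [toPGL3, toPGL3, toPGL3, dif_pos hA, dif_pos hB, dif_pos hAB, ← QuotientGroup.mk_mul]
  congr 1
  exact Units.ext rfl

lemma toPGL3_one : toPGL3 (1 : Matrix (Fin 3) (Fin 3) K) = 1 := by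
  rw [toPGL3, dif_pos (by simp : (1 : Matrix (Fin 3) (Fin 3) K).det ≠ 0)]
  have : Matrix.GeneralLinearGroup.mkOfDetNeZero (1 : Matrix (Fin 3) (Fin 3) K)
      (by simp) = 1 := Units.ext rfl
  rw [this, QuotientGroup.mk_one]

lemma toPGL3_smul {A : Matrix (Fin 3) (Fin 3) K} (hA : A.det ≠ 0) {c : K} (hc : c ≠ 0) :
    toPGL3 (c • A) = toPGL3 A := by
  have hcA : (c • A).det ≠ 0 := by
    rw [Matrix.det_smul]
    exact mul_ne_zero (pow_ne_zero _ hc) hA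
  rw [toPGL3_eq_iff hcA hA]
  exact ⟨c⁻¹, inv_ne_zero hc, by rw [smul_smul, inv_mul_cancel₀ hc, one_smul]⟩

lemma toPGL3_pow {A : Matrix (Fin 3) (Fin 3) K} (hA : A.det ≠ 0) (m : ℕ) :
    toPGL3 (A ^ m) = (toPGL3 A) ^ m := by
  induction m with
  | zero => simpa using toPGL3_one
  | succ t ih =>
      have hAt : (A ^ t).det ≠ 0 := by rw [Matrix.det_pow]; exact pow_ne_zero _ hA
      rw [pow_succ, pow_succ, toPGL3_mul hAt hA, ih]

lemma mem_normalizer_zpowers {G : Type*} [Group G] {a h : G} (k j : ℕ)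
    (hk : h * a = a ^ k * h) (hj : a * h = h * a ^ j) :
    h ∈ Subgroup.normalizer ((Subgroup.zpowers a : Subgroup G) : Set G) := by
  have hk' : h * a * h⁻¹ = a ^ k := by rw [hk]; group
  have hj' : h⁻¹ * a * h = a ^ j := by
    rw [mul_assoc, hj, ← mul_assoc, inv_mul_cancel, one_mul]
  rw [Subgroup.mem_normalizer_iff]
  intro x
  constructor
  · rintro ⟨m, rfl⟩
    have : h * a ^ m * h⁻¹ = (h * a * h⁻¹) ^ m := (conj_zpow).symm
    rw [this, hk']
    exact Subgroup.zpow_mem _ (Subgroup.pow_mem _ (Subgroup.mem_zpowers a) k) m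
  · rintro ⟨m, hm⟩
    have hx : x = h⁻¹ * a ^ m * h := by
      have := congrArg (fun y => h⁻¹ * y * h) hm
      simpa [mul_assoc] using this.symm
    rw [hx]
    have : h⁻¹ * a ^ m * h = (h⁻¹ * a * h) ^ m := by
      have := (conj_zpow (i := m) (a := h⁻¹) (b := a))
      simpa using this.symm
    rw [this, hj']
    exact Subgroup.zpow_mem _ (Subgroup.pow_mem _ (Subgroup.mem_zpowers a) j) m

end Aux

section Aux2
variable {K : Type*} [Field K]
open Matrix

lemma prim_pow_eq_iff {n : ℕ} [NeZero n] {ζ : K} (hζ : IsPrimitiveRoot ζ n) (s t : ℕ) :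
    ζ ^ s = ζ ^ t ↔ (s : ZMod n) = (t : ZMod n) := by
  have hn : 0 < n := Nat.pos_of_ne_zero (NeZero.ne n)
  have e : ∀ m : ℕ, ζ ^ m = ζ ^ (m % n) := by
    intro m
    conv_lhs => rw [← Nat.mod_add_div m n]
    rw [pow_add, pow_mul, hζ.pow_eq_one, one_pow, mul_one]
  rw [ZMod.natCast_eq_natCast_iff]
  constructor
  · intro h
    exact hζ.pow_inj (Nat.mod_lt _ hn) (Nat.mod_lt _ hn) (by rw [← e, ← e, h])
  · intro h
    rw [e s, e t]
    exact congrArg (ζ ^ ·) h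

lemma prim_pow_val_eq_iff {n : ℕ} [NeZero n] {ζ : K} (hζ : IsPrimitiveRoot ζ n)
    (u v : ZMod n) : ζ ^ u.val = ζ ^ v.val ↔ u = v := by
  rw [prim_pow_eq_iff hζ]
  simp [ZMod.natCast_val, ZMod.cast_id]

lemma monomial_of_eq {d d' : Fin 3 → K} (hd : Function.Injective d)
    {M : Matrix (Fin 3) (Fin 3) K} (hM : M.det ≠ 0) {c : K}
    (h : M * diagonal d = c • (diagonal d' * M)) :
    ∃ (σ : Equiv.Perm (Fin 3)) (r : Fin 3 → K), (∀ a, r a ≠ 0) ∧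
      M = diagonal r * σ.permMatrix K ∧ ∀ a, d (σ a) = c * d' a := by
  have hent : ∀ a b, M a b * d b = c * (d' a * M a b) := by
    intro a b
    have := congrFun (congrFun h a) b
    simpa [Matrix.mul_diagonal, Matrix.diagonal_mul, Matrix.smul_apply, smul_eq_mul] using this
  have himp : ∀ a b, M a b ≠ 0 → d b = c * d' a := by
    intro a b hab
    have h' : M a b * d b = M a b * (c * d' a) := by linear_combination hent a b
    exact mul_left_cancel₀ hab h'
  have hex : ∀ a, ∃ b, M a b ≠ 0 := by
    intro a
    by_contra hcon
    push_neg at hcon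
    exact hM (Matrix.det_eq_zero_of_row_eq_zero a hcon)
  have huniq : ∀ a b b', M a b ≠ 0 → M a b' ≠ 0 → b = b' := fun a b b' h1 h2 =>
    hd ((himp a b h1).trans (himp a b' h2).symm)
  choose f hf using hex
  have hzero : ∀ a b, b ≠ f a → M a b = 0 := by
    intro a b hb
    by_contra h'
    exact hb (huniq a b (f a) h' (hf a))
  have hfinj : Function.Injective f := by
    intro a1 a2 h12
    by_contra hne
    apply hM
    rw [← Matrix.det_transpose, ← Matrix.exists_mulVec_eq_zero_iff]
    refine ⟨Pi.single a1 (M a2 (f a1)) - Pi.single a2 (M a1 (f a1)), ?_, ?_⟩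
    · intro hv
      have := congrFun hv a1
      rw [Pi.sub_apply, Pi.single_eq_same, Pi.single_eq_of_ne hne, sub_zero, Pi.zero_apply,
        h12] at this
      exact hf a2 this
    · funext b
      have expand : ∀ (a : Fin 3) (w : K),
          (Mᵀ *ᵥ Pi.single a w) b = M a b * w := by
        intro a w
        rw [Matrix.mulVec_single]
        simp [Matrix.transpose_apply, mul_comm]
      rw [Matrix.mulVec_sub, Pi.sub_apply, expand, expand, Pi.zero_apply]
      by_cases hb : b = f a1
      · subst hb
        ring
      · rw [hzero a1 b hb, hzero a2 b (by rw [← h12]; exact hb), zero_mul, zero_mul, sub_zero]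
  have hfbij : Function.Bijective f := Finite.injective_iff_bijective.mp hfinj
  refine ⟨Equiv.ofBijective f hfbij, fun a => M a (f a), fun a => hf a, ?_, ?_⟩
  · ext a b
    rw [Matrix.diagonal_mul]
    rw [Equiv.Perm.permMatrix, PEquiv.toMatrix_apply, Equiv.toPEquiv_apply]
    simp only [Option.mem_some_iff, Equiv.ofBijective_apply]
    by_cases hb : b = f a
    · subst hb; simp
    · rw [if_neg (Ne.symm hb), mul_zero, hzero a b hb]
  · intro a
    exact himp a (f a) (hf (a))

end Aux2

section Master
variable {K : Type*} [Field K]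
open Matrix

lemma permMatrix_mul_diagonal (σ : Equiv.Perm (Fin 3)) (e : Fin 3 → K) :
    σ.permMatrix K * diagonal e = diagonal (e ∘ σ) * σ.permMatrix K := by
  ext a b
  by_cases hb : σ a = b <;>
    simp [Equiv.Perm.permMatrix, PEquiv.toMatrix_apply, Equiv.toPEquiv_apply,
      Matrix.mul_diagonal, Matrix.diagonal_mul, hb]

lemma permMatrix_det_ne (σ : Equiv.Perm (Fin 3)) : ((σ.permMatrix K)).det ≠ 0 := by
  rw [Matrix.det_permutation]
  rcases Int.units_eq_one_or (Equiv.Perm.sign σ) with h | h <;> rw [h] <;> simp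

lemma master {n : ℕ} [NeZero n] {ζ : K} (hζ : IsPrimitiveRoot ζ n)
    (E : Fin 3 → ZMod n) (hE : Function.Injective E)
    (σ₀ : Equiv.Perm (Fin 3)) (k e₀ k' e₀' : ZMod n)
    (h1 : ∀ a, E (σ₀ a) = k * E a + e₀) (h2 : ∀ a, E (σ₀⁻¹ a) = k' * E a + e₀')
    (hperm : ∀ (m : ZMod n) (σ : Equiv.Perm (Fin 3)),
      (∀ p q, E (σ p) + m * E q = E (σ q) + m * E p) → σ = 1 ∨ σ = σ₀ ∨ σ = σ₀⁻¹) :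
    Subgroup.normalizer ((Subgroup.closure {toPGL3 (Matrix.diagonal (fun j => ζ ^ (E j).val))} : Subgroup (PGL3 K)) : Set (PGL3 K))
      = Subgroup.closure
        ({x : PGL3 K | ∃ d : Fin 3 → K, (∀ j, d j ≠ 0) ∧ x = toPGL3 (Matrix.diagonal d)} ∪
          {toPGL3 (σ₀.permMatrix K)}) := by
  have hn : (n : ℕ) ≠ 0 := NeZero.ne n
  have hζ0 : ζ ≠ 0 := by
    intro h0
    have := hζ.pow_eq_one
    rw [h0, zero_pow hn] at this
    exact zero_ne_one this
  set d : Fin 3 → K := fun j => ζ ^ (E j).val with hday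
  have hd0 : ∀ j, d j ≠ 0 := fun j => pow_ne_zero _ hζ0
  have hdinj : Function.Injective d := by
    intro p q hpq
    exact hE ((prim_pow_val_eq_iff hζ _ _).mp hpq)
  have hddet : ∀ (e : Fin 3 → K), (∀ j, e j ≠ 0) → (diagonal e).det ≠ 0 := by
    intro e he
    rw [Matrix.det_diagonal]
    exact Finset.prod_ne_zero_iff.mpr fun j _ => he j
  have hgdet := hddet d hd0
  have hv : ∀ u : ZMod n, ((u.val : ZMod n)) = u := fun u => by
    simp [ZMod.natCast_val, ZMod.cast_id]
  have hdpow : ∀ m : ℕ, (diagonal d) ^ m = diagonal (fun j => d j ^ m) := by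
    intro m; rw [Matrix.diagonal_pow]; rfl
  have hdpowdet : ∀ m : ℕ, ((diagonal d) ^ m).det ≠ 0 := by
    intro m; rw [hdpow]; exact hddet _ fun j => pow_ne_zero _ (hd0 j)
  set a : PGL3 K := toPGL3 (diagonal d) with ha
  have hsc1 : ∀ b : Fin 3, d (σ₀ b) = ζ ^ e₀.val * d b ^ k.val := by
    intro b
    show ζ ^ (E (σ₀ b)).val = ζ ^ e₀.val * (ζ ^ (E b).val) ^ k.val
    rw [← pow_mul, ← pow_add, prim_pow_eq_iff hζ, h1 b]
    push_cast [hv]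
    ring
  have hsc2 : ∀ b : Fin 3, d b = ζ ^ e₀'.val * d (σ₀ b) ^ k'.val := by
    intro b
    have h2' := h2 (σ₀ b)
    rw [Equiv.Perm.inv_def, Equiv.symm_apply_apply] at h2'
    show ζ ^ (E b).val = ζ ^ e₀'.val * (ζ ^ (E (σ₀ b)).val) ^ k'.val
    rw [← pow_mul, ← pow_add, prim_pow_eq_iff hζ, h2']
    push_cast [hv]
    ring
  have hconj1 : σ₀.permMatrix K * diagonal d
      = (ζ ^ e₀.val) • ((diagonal d) ^ k.val * σ₀.permMatrix K) := by
    have hfun : (d ∘ σ₀) = (ζ ^ e₀.val) • (fun j => d j ^ k.val) := by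
      funext b
      simpa [smul_eq_mul] using hsc1 b
    rw [permMatrix_mul_diagonal, hdpow, ← Matrix.smul_mul, ← Matrix.diagonal_smul, hfun]
  have hconj2 : diagonal d * σ₀.permMatrix K
      = (ζ ^ e₀'.val) • (σ₀.permMatrix K * (diagonal d) ^ k'.val) := by
    have hfun : d = (ζ ^ e₀'.val) • ((fun j => d j ^ k'.val) ∘ σ₀) := by
      funext b
      simpa [smul_eq_mul] using hsc2 b
    rw [hdpow, permMatrix_mul_diagonal, ← Matrix.smul_mul, ← Matrix.diagonal_smul]
    conv_lhs => rw [hfun]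
  have hpa : toPGL3 (σ₀.permMatrix K) * a = a ^ k.val * toPGL3 (σ₀.permMatrix K) := by
    rw [ha, ← toPGL3_mul (permMatrix_det_ne σ₀) hgdet, hconj1,
      toPGL3_smul (by rw [Matrix.det_mul]; exact mul_ne_zero (hdpowdet _) (permMatrix_det_ne σ₀))
        (pow_ne_zero _ hζ0),
      toPGL3_mul (hdpowdet _) (permMatrix_det_ne σ₀), toPGL3_pow hgdet]
  have hap : a * toPGL3 (σ₀.permMatrix K) = toPGL3 (σ₀.permMatrix K) * a ^ k'.val := by
    rw [ha, ← toPGL3_mul hgdet (permMatrix_det_ne σ₀), hconj2,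
      toPGL3_smul (by rw [Matrix.det_mul]; exact mul_ne_zero (permMatrix_det_ne σ₀) (hdpowdet _))
        (pow_ne_zero _ hζ0),
      toPGL3_mul (permMatrix_det_ne σ₀) (hdpowdet _), toPGL3_pow hgdet]
  rw [← Subgroup.zpowers_eq_closure]
  apply le_antisymm
  swap
  · rw [Subgroup.closure_le]
    rintro s (⟨e, he, rfl⟩ | rfl)
    · have hcomm : diagonal e * diagonal d = diagonal d * diagonal e := by
        have hf : (fun i => e i * d i) = fun i => d i * e i := funext fun i => mul_comm _ _
        rw [Matrix.diagonal_mul_diagonal, Matrix.diagonal_mul_diagonal, hf]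
      apply mem_normalizer_zpowers 1 1
      · rw [pow_one, ha, ← toPGL3_mul (hddet e he) hgdet, ← toPGL3_mul hgdet (hddet e he), hcomm]
      · rw [pow_one, ha, ← toPGL3_mul hgdet (hddet e he), ← toPGL3_mul (hddet e he) hgdet, hcomm]
    · exact mem_normalizer_zpowers k.val k'.val hpa hap
  · intro x hx
    have hxa : x * a * x⁻¹ ∈ Subgroup.zpowers a :=
      (Subgroup.mem_normalizer_iff.mp hx a).mp (Subgroup.mem_zpowers a)
    obtain ⟨m, hm⟩ := Subgroup.mem_zpowers_iff.mp hxa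
    have hdn : (fun j => d j ^ n) = fun _ => (1 : K) := by
      funext j
      show (ζ ^ (E j).val) ^ n = 1
      rw [← pow_mul, mul_comm, pow_mul, hζ.pow_eq_one, one_pow]
    have han : a ^ n = 1 := by
      rw [ha, ← toPGL3_pow hgdet, hdpow, hdn,
        show (diagonal (fun _ => (1 : K)) : Matrix (Fin 3) (Fin 3) K) = 1 from Matrix.diagonal_one]
      exact toPGL3_one
    set kk : ZMod n := ((m : ℤ) : ZMod n) with hkk
    have hred : a ^ m = a ^ (kk.val : ℕ) := by
      have hdvd : (n : ℤ) ∣ (kk.val : ℤ) - m := by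
        rw [← ZMod.intCast_zmod_eq_zero_iff_dvd]
        push_cast [hv]
        rw [← hkk, sub_self]
      obtain ⟨t, ht⟩ := hdvd
      have hm' : m = (kk.val : ℤ) - (n : ℤ) * t := by linarith
      have h1t : a ^ ((n : ℤ) * t) = 1 := by
        rw [_root_.zpow_mul, zpow_natCast, han, _root_.one_zpow]
      rw [hm', _root_.zpow_sub, h1t, inv_one, mul_one, zpow_natCast]
    rw [hred] at hm
    obtain ⟨U, rfl⟩ := QuotientGroup.mk_surjective x
    have hudet : ((U : Matrix (Fin 3) (Fin 3) K)).det ≠ 0 :=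
      ((Matrix.isUnit_iff_isUnit_det _).mp U.isUnit).ne_zero
    have hqu : toPGL3 ((U : Matrix (Fin 3) (Fin 3) K)) = QuotientGroup.mk U := toPGL3_coe U
    have hgl : toPGL3 ((U : Matrix (Fin 3) (Fin 3) K) * diagonal d)
        = toPGL3 (diagonal (fun j => d j ^ kk.val) * (U : Matrix (Fin 3) (Fin 3) K)) := by
      rw [toPGL3_mul hudet hgdet,
        toPGL3_mul (by rw [← hdpow]; exact hdpowdet _) hudet, hqu, ← hdpow,
        toPGL3_pow hgdet, ← ha, hm]
      group
    rw [toPGL3_eq_iff (by rw [Matrix.det_mul]; exact mul_ne_zero hudet hgdet)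
      (by rw [Matrix.det_mul]; exact mul_ne_zero (by rw [← hdpow]; exact hdpowdet _) hudet)] at hgl
    obtain ⟨c, hc, hmat⟩ := hgl
    have hmat' : (U : Matrix (Fin 3) (Fin 3) K) * diagonal d
        = c⁻¹ • (diagonal (fun j => d j ^ kk.val) * (U : Matrix (Fin 3) (Fin 3) K)) := by
      rw [hmat, smul_smul, inv_mul_cancel₀ hc, one_smul]
    obtain ⟨σ, r, hr, hfac, hval⟩ := monomial_of_eq hdinj hudet hmat'
    have hexp : ∀ p q : Fin 3, E (σ p) + kk * E q = E (σ q) + kk * E p := by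
      intro p q
      have e3 : d (σ p) * d q ^ kk.val = d (σ q) * d p ^ kk.val := by
        rw [hval p, hval q]; ring
      have e4 : ζ ^ ((E (σ p)).val + (E q).val * kk.val)
          = ζ ^ ((E (σ q)).val + (E p).val * kk.val) := by
        rw [pow_add, pow_add, pow_mul, pow_mul]
        exact e3
      rw [prim_pow_eq_iff hζ] at e4
      push_cast [hv] at e4
      linear_combination e4
    have hxmem : (QuotientGroup.mk U : PGL3 K)
        = toPGL3 (diagonal r) * toPGL3 (σ.permMatrix K) := by
      rw [← hqu, hfac, toPGL3_mul (hddet r hr) (permMatrix_det_ne σ)]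
    rw [hxmem]
    apply Subgroup.mul_mem
    · exact Subgroup.subset_closure (Or.inl ⟨r, hr, rfl⟩)
    · rcases hperm kk σ hexp with hσ | hσ | hσ
      · have h1p : (1 : Equiv.Perm (Fin 3)).permMatrix K = 1 := by
          ext p q
          simp [Equiv.Perm.permMatrix, PEquiv.toMatrix_apply, Equiv.toPEquiv_apply,
            Matrix.one_apply, eq_comm]
        rw [hσ, h1p, toPGL3_one]
        exact Subgroup.one_mem _
      · rw [hσ]
        exact Subgroup.subset_closure (Or.inr rfl)
      · rw [hσ]
        have hPP : (σ₀⁻¹.permMatrix K) * σ₀.permMatrix K = 1 := by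
          ext p q
          rw [PEquiv.toMatrix_toPEquiv_mul]
          simp [Matrix.submatrix_apply, Equiv.Perm.permMatrix, PEquiv.toMatrix_apply,
            Equiv.toPEquiv_apply, Matrix.one_apply, eq_comm]
        have hinv : toPGL3 (σ₀⁻¹.permMatrix K) = (toPGL3 (σ₀.permMatrix K))⁻¹ := by
          apply eq_inv_of_mul_eq_one_left
          rw [← toPGL3_mul (permMatrix_det_ne _) (permMatrix_det_ne _), hPP, toPGL3_one]
        rw [hinv]
        exact Subgroup.inv_mem _ (Subgroup.subset_closure (Or.inr rfl))

end Master

theorem stmt4 {K : Type*} [Field K] [IsAlgClosed K] [CharZero K]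
    (i ζ₅ ζ₇ : K) (hi : IsPrimitiveRoot i 4) (h5 : IsPrimitiveRoot ζ₅ 5)
    (h7 : IsPrimitiveRoot ζ₇ 7) :
    let D : Set (PGL3 K) :=
      {x | ∃ d : Fin 3 → K, (∀ j, d j ≠ 0) ∧ x = toPGL3 (Matrix.diagonal d)}
    Subgroup.normalizer ((Subgroup.closure {toPGL3 (Matrix.diagonal ![1, i, -1])} : Subgroup (PGL3 K)) : Set (PGL3 K)) =
        Subgroup.closure (D ∪ {toPGL3 !![0,0,1; 0,1,0; 1,0,0]}) ∧
      Subgroup.normalizer ((Subgroup.closure {toPGL3 (Matrix.diagonal ![1, ζ₅, ζ₅ ^ 3])} : Subgroup (PGL3 K)) : Set (PGL3 K)) =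
        Subgroup.closure (D ∪ {toPGL3 !![0,1,0; 1,0,0; 0,0,1]}) ∧
      Subgroup.normalizer ((Subgroup.closure {toPGL3 (Matrix.diagonal ![1, ζ₇, ζ₇ ^ 3])} : Subgroup (PGL3 K)) : Set (PGL3 K)) =
        Subgroup.closure (D ∪ {toPGL3 !![0,1,0; 0,0,1; 1,0,0]}) := by
  intro D
  have hi2 : i ^ 2 = -1 := by
    have h4 : (i ^ 2) * (i ^ 2) = 1 := by
      rw [← pow_add]
      norm_num
      exact hi.pow_eq_one
    rcases mul_self_eq_one_iff.mp h4 with h | h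
    · exact absurd h (hi.pow_ne_one_of_pos_of_lt (by norm_num) (by norm_num))
    · exact h
  refine ⟨?_, ?_, ?_⟩
  · have hgen : (Matrix.diagonal ![1, i, -1] : Matrix (Fin 3) (Fin 3) K)
        = Matrix.diagonal (fun j => i ^ (((![0,1,2] : Fin 3 → ZMod 4) j)).val) := by
      have hvec : (![1, i, -1] : Fin 3 → K)
          = fun j => i ^ (((![0,1,2] : Fin 3 → ZMod 4) j)).val := by
        funext j
        fin_cases j <;>
        simp [show ((0 : ZMod 4)).val = 0 from rfl, show ((1 : ZMod 4)).val = 1 from rfl,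
          show ((2 : ZMod 4)).val = 2 from rfl, hi2]
      rw [hvec]
    have hP : (!![0,0,1; 0,1,0; 1,0,0] : Matrix (Fin 3) (Fin 3) K)
        = (Equiv.swap (0 : Fin 3) 2).permMatrix K := by
      ext a b
      fin_cases a <;> fin_cases b <;>
        simp [Equiv.Perm.permMatrix, PEquiv.toMatrix_apply, Equiv.toPEquiv_apply,
          Equiv.swap_apply_def, Matrix.vecHead, Matrix.vecTail]
    rw [hgen, hP]
    exact master hi ![0,1,2] (by decide) (Equiv.swap 0 2) 3 2 3 2 (by decide) (by decide)
      (by decide)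
  · have hgen : (Matrix.diagonal ![1, ζ₅, ζ₅ ^ 3] : Matrix (Fin 3) (Fin 3) K)
        = Matrix.diagonal (fun j => ζ₅ ^ (((![0,1,3] : Fin 3 → ZMod 5) j)).val) := by
      have hvec : (![1, ζ₅, ζ₅ ^ 3] : Fin 3 → K)
          = fun j => ζ₅ ^ (((![0,1,3] : Fin 3 → ZMod 5) j)).val := by
        funext j
        fin_cases j <;>
        simp [show ((0 : ZMod 5)).val = 0 from rfl, show ((1 : ZMod 5)).val = 1 from rfl,
          show ((3 : ZMod 5)).val = 3 from rfl]
      rw [hvec]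
    have hP : (!![0,1,0; 1,0,0; 0,0,1] : Matrix (Fin 3) (Fin 3) K)
        = (Equiv.swap (0 : Fin 3) 1).permMatrix K := by
      ext a b
      fin_cases a <;> fin_cases b <;>
        simp [Equiv.Perm.permMatrix, PEquiv.toMatrix_apply, Equiv.toPEquiv_apply,
          Equiv.swap_apply_def, Matrix.vecHead, Matrix.vecTail]
    rw [hgen, hP]
    exact master h5 ![0,1,3] (by decide) (Equiv.swap 0 1) 4 1 4 1 (by decide) (by decide)
      (by decide)
  · have hgen : (Matrix.diagonal ![1, ζ₇, ζ₇ ^ 3] : Matrix (Fin 3) (Fin 3) K)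
        = Matrix.diagonal (fun j => ζ₇ ^ (((![0,1,3] : Fin 3 → ZMod 7) j)).val) := by
      have hvec : (![1, ζ₇, ζ₇ ^ 3] : Fin 3 → K)
          = fun j => ζ₇ ^ (((![0,1,3] : Fin 3 → ZMod 7) j)).val := by
        funext j
        fin_cases j <;>
        simp [show ((0 : ZMod 7)).val = 0 from rfl, show ((1 : ZMod 7)).val = 1 from rfl,
          show ((3 : ZMod 7)).val = 3 from rfl]
      rw [hvec]
    have hP : (!![0,1,0; 0,0,1; 1,0,0] : Matrix (Fin 3) (Fin 3) K)
        = (Equiv.swap (0 : Fin 3) 1 * Equiv.swap (1 : Fin 3) 2).permMatrix K := by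
      ext a b
      fin_cases a <;> fin_cases b <;>
        simp [Equiv.Perm.permMatrix, PEquiv.toMatrix_apply, Equiv.toPEquiv_apply,
          Equiv.Perm.mul_apply, Equiv.swap_apply_def, Matrix.vecHead, Matrix.vecTail]
    rw [hgen, hP]
    exact master h7 ![0,1,3] (by decide) (Equiv.swap 0 1 * Equiv.swap 1 2) 2 1 4 3 (by decide)
      (by decide) (by decide)
end
end

section
/- Let K be an algebraically closed field of characteristic 0, let ζ ∈ K be a primitive 5th root of unity, and let F : K³ → K³ be the polynomial map F(X,Y,Z) = (YZ, X², Y²). Then Aut(F) is exactly the cyclic subgroup of PGL₃(K) of order 5 generated by the class [diag(1, ζ, ζ³)]. -/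
open Matrix MvPolynomial
open scoped Classical

noncomputable section

/-- A unit whose matrix is scalar lies in the center of `GL₃`. -/
lemma scalar_central {K : Type*} [Field K] (a : K) (U : GL (Fin 3) K)
    (hU : (U : Matrix (Fin 3) (Fin 3) K) = a • (1 : Matrix (Fin 3) (Fin 3) K)) :
    U ∈ Subgroup.center (GL (Fin 3) K) := by
  rw [Subgroup.mem_center_iff]
  intro g
  ext
  show ((g * U : GL (Fin 3) K) : Matrix (Fin 3) (Fin 3) K) _ _ =
    ((U * g : GL (Fin 3) K) : Matrix (Fin 3) (Fin 3) K) _ _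
  simp [Units.val_mul, hU, Matrix.mul_smul, Matrix.smul_mul]

/-- If two units differ by a nonzero scalar, they have the same class in `PGL₃`. -/
lemma mk_eq_of_scalar {K : Type*} [Field K] (N M : GL (Fin 3) K) (a : K) (ha : a ≠ 0)
    (h : (N : Matrix (Fin 3) (Fin 3) K) = a • (M : Matrix (Fin 3) (Fin 3) K)) :
    (QuotientGroup.mk N : PGL3 K) = QuotientGroup.mk M := by
  have hdet : (a • (1 : Matrix (Fin 3) (Fin 3) K)).det ≠ 0 := by
    simp [Matrix.det_smul, ha]
  set S : GL (Fin 3) K := Matrix.GeneralLinearGroup.mkOfDetNeZero _ hdet with hS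
  have hScoe : (S : Matrix (Fin 3) (Fin 3) K) = a • (1 : Matrix (Fin 3) (Fin 3) K) := rfl
  have hNS : N = S * M := by
    ext i j
    show (N : Matrix (Fin 3) (Fin 3) K) i j = ((S * M : GL (Fin 3) K) : Matrix (Fin 3) (Fin 3) K) i j
    rw [h, Units.val_mul, hScoe, Matrix.smul_mul, Matrix.one_mul]
  rw [hNS, QuotientGroup.mk_mul, (QuotientGroup.eq_one_iff S).mpr (scalar_central a S hScoe),
    one_mul]

theorem stmt5 {K : Type*} [Field K] [IsAlgClosed K] [CharZero K]
    (ζ : K) (hζ : IsPrimitiveRoot ζ 5) :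
    AutQ (fun v : Fin 3 → K => ![v 1 * v 2, v 0 ^ 2, v 1 ^ 2]) =
        ↑(Subgroup.closure {toPGL3 (Matrix.diagonal ![1, ζ, ζ ^ 3])}) ∧
      Nat.card (Subgroup.closure {toPGL3 (Matrix.diagonal ![(1 : K), ζ, ζ ^ 3])}) = 5 := by
  have hζ0 : ζ ≠ 0 := hζ.ne_zero (by norm_num)
  have hζ5 : ζ ^ 5 = 1 := hζ.pow_eq_one
  have hζ1 : ζ ≠ 1 := hζ.ne_one (by norm_num)
  set Dm : Matrix (Fin 3) (Fin 3) K := Matrix.diagonal ![1, ζ, ζ ^ 3] with hDm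
  have hdet : Dm.det ≠ 0 := by
    simp [hDm, Matrix.det_diagonal, Fin.prod_univ_three, hζ0]
  set D : GL (Fin 3) K := Matrix.GeneralLinearGroup.mkOfDetNeZero Dm hdet with hD
  have hDcoe : (D : Matrix (Fin 3) (Fin 3) K) = Dm := rfl
  have hg : toPGL3 Dm = QuotientGroup.mk D := by rw [toPGL3, dif_pos hdet]
  -- powers of D
  have hDpow : ∀ k : ℕ, ((D ^ k : GL (Fin 3) K) : Matrix (Fin 3) (Fin 3) K)
      = Matrix.diagonal ![1, ζ ^ k, (ζ ^ 3) ^ k] := by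
    intro k
    rw [Units.val_pow_eq_pow_val, hDcoe, hDm, Matrix.diagonal_pow]
    have hvp : (![1, ζ, ζ ^ 3] : Fin 3 → K) ^ k = ![1, ζ ^ k, (ζ ^ 3) ^ k] := by
      funext i; fin_cases i <;> simp [Pi.pow_apply]
    rw [hvp]
  -- D^5 = 1
  have h35 : (ζ ^ 3) ^ 5 = 1 := by rw [← pow_mul, mul_comm, pow_mul, hζ5, one_pow]
  have hD5 : D ^ 5 = 1 := by
    ext i j
    show ((D ^ 5 : GL (Fin 3) K) : Matrix (Fin 3) (Fin 3) K) i j = (1 : Matrix (Fin 3) (Fin 3) K) i j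
    rw [hDpow 5, hζ5, h35,
      show (![1, 1, 1] : Fin 3 → K) = 1 from by funext i; fin_cases i <;> rfl]
    simp [Matrix.diagonal_apply, Matrix.one_apply]
  -- g ≠ 1
  have hgne : (QuotientGroup.mk D : PGL3 K) ≠ 1 := by
    intro h
    have hcen : D ∈ Subgroup.center (GL (Fin 3) K) := (QuotientGroup.eq_one_iff D).mp h
    have hPdet : (Matrix.of ![![0,1,0],![1,0,0],![0,0,1]] : Matrix (Fin 3) (Fin 3) K).det ≠ 0 := by
      simp [Matrix.det_fin_three]
    set P := Matrix.GeneralLinearGroup.mkOfDetNeZero _ hPdet with hP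
    have hPD := Subgroup.mem_center_iff.mp hcen P
    have h01 := congrFun (congrFun (congrArg (fun (u : GL (Fin 3) K) =>
      (u : Matrix (Fin 3) (Fin 3) K)) hPD) 0) 1
    have hPcoe : (P : Matrix (Fin 3) (Fin 3) K) = Matrix.of ![![0,1,0],![1,0,0],![0,0,1]] := rfl
    simp only [Units.val_mul, hPcoe, hDcoe, hDm] at h01
    rw [Matrix.mul_apply, Matrix.mul_apply, Fin.sum_univ_three, Fin.sum_univ_three] at h01
    simp [Matrix.diagonal_apply] at h01
    exact hζ1 h01
  have hg5 : (QuotientGroup.mk D : PGL3 K) ^ 5 = 1 := by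
    rw [← QuotientGroup.mk_pow, hD5]; rfl
  haveI : Fact (Nat.Prime 5) := ⟨by norm_num⟩
  have hord : orderOf (QuotientGroup.mk D : PGL3 K) = 5 := orderOf_eq_prime hg5 hgne
  have hcard : Nat.card (Subgroup.closure {toPGL3 Dm}) = 5 := by
    rw [hg, ← Subgroup.zpowers_eq_closure, Nat.card_zpowers, hord]
  -- membership of g (and its powers) in AutQ
  have hgAut : (QuotientGroup.mk D : PGL3 K) ∈
      AutQ (fun v : Fin 3 → K => ![v 1 * v 2, v 0 ^ 2, v 1 ^ 2]) := by
    refine ⟨D, rfl, ζ ^ 4, pow_ne_zero _ hζ0, ?_⟩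
    intro v
    funext i
    rw [hDcoe, hDm]
    fin_cases i <;>
      simp [Matrix.mulVec, dotProduct, Fin.sum_univ_three, Matrix.diagonal_apply] <;>
      first
        | ring1
        | linear_combination (-(v 0 ^ 2)) * hζ5
        | linear_combination (v 0 ^ 2) * hζ5
        | linear_combination (-(ζ ^ 2 * v 1 ^ 2)) * hζ5
        | linear_combination (ζ ^ 2 * v 1 ^ 2) * hζ5
  refine ⟨?_, hcard⟩
  apply subset_antisymm
  · -- AutQ ⊆ closure
    rintro φ ⟨N, rfl, c, hc, E⟩
    have hNdet : ((N : Matrix (Fin 3) (Fin 3) K)).det ≠ 0 :=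
      ((Matrix.isUnit_iff_isUnit_det _).mp N.isUnit).ne_zero
    have h1 := congrFun (E ![0,0,1]) 1
    have h2 := congrFun (E ![0,0,1]) 2
    have h3 := congrFun (E ![1,0,0]) 1
    have h4 := congrFun (E ![1,0,0]) 2
    have h5 := congrFun (E ![0,1,1]) 0
    have h6 := congrFun (E ![0,1,1]) 1
    have h7 := congrFun (E ![0,1,1]) 2
    have h8 := congrFun (E ![0,1,-1]) 1
    have h9 := congrFun (E ![0,1,-1]) 2
    simp [Matrix.mulVec, dotProduct, Fin.sum_univ_three] at h1 h2 h3 h4 h5 h6 h7 h8 h9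
    set Nm : Matrix (Fin 3) (Fin 3) K := (N : Matrix (Fin 3) (Fin 3) K) with hNm
    have e10 : Nm 1 0 = 0 := by
      have h2c : c * (2 * Nm 1 0) = 0 := by linear_combination h8 - h6 + 4 * Nm 0 1 * h1
      rcases mul_eq_zero.mp h2c with h | h
      · exact absurd h hc
      · rcases mul_eq_zero.mp h with h | h
        · exact absurd h two_ne_zero
        · exact h
    have e01 : Nm 0 1 = 0 := by
      have : Nm 0 1 ^ 2 = 0 := by
        linear_combination h6 - (2 * Nm 0 1 + Nm 0 2) * h1 + c * h2 + c * e10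
      exact sq_eq_zero_iff.mp this
    have e21 : Nm 2 1 = 0 := by
      have h2c : c * Nm 2 1 = 0 := by linear_combination Nm 1 0 * e10 - h4
      rcases mul_eq_zero.mp h2c with h | h
      · exact absurd h hc
      · exact h
    have e20 : Nm 2 0 = 0 := by
      have h2c : c * (2 * Nm 2 0) = 0 := by linear_combination h9 - h7 + 4 * Nm 1 1 * h2
      rcases mul_eq_zero.mp h2c with h | h
      · exact absurd h hc
      · rcases mul_eq_zero.mp h with h | h
        · exact absurd h two_ne_zero
        · exact h
    have A1 : Nm 0 0 ^ 2 = c * Nm 1 1 := h3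
    have A2 : Nm 1 1 ^ 2 = c * Nm 2 2 := by
      linear_combination h7 - (2 * Nm 1 1 + Nm 1 2) * h2 + c * e20
    have A3 : Nm 1 1 * Nm 2 2 = c * Nm 0 0 := by
      linear_combination h5 - (Nm 2 1 + Nm 2 2) * h2 - Nm 1 1 * e21 + c * h1
    have hdet3 : Nm.det = Nm 0 0 * Nm 1 1 * Nm 2 2 := by
      rw [Matrix.det_fin_three, h1, h2, e10, e01, e21, e20]; ring
    rw [hdet3] at hNdet
    have hn00 : Nm 0 0 ≠ 0 := fun h => hNdet (by rw [h]; ring)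
    have hn11 : Nm 1 1 ≠ 0 := fun h => hNdet (by rw [h]; ring)
    have hn22 : Nm 2 2 ≠ 0 := fun h => hNdet (by rw [h]; ring)
    have ht5 : (Nm 1 1 / Nm 0 0) ^ 5 = 1 := by
      rw [div_pow, div_eq_one_iff_eq (pow_ne_zero _ hn00)]
      linear_combination (Nm 1 1 ^ 3 + c * Nm 1 1 * Nm 2 2 - c ^ 2 * Nm 0 0) * A2 +
        c ^ 2 * Nm 2 2 * A3 - (Nm 0 0 ^ 3 + c * Nm 0 0 * Nm 1 1) * A1
    obtain ⟨k, hk5, hk⟩ := hζ.eq_pow_of_pow_eq_one ht5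
    have hNmat : Nm = Nm 0 0 • ((D ^ k : GL (Fin 3) K) : Matrix (Fin 3) (Fin 3) K) := by
      rw [hDpow k]
      ext i j
      fin_cases i <;> fin_cases j <;>
        simp [Matrix.diagonal_apply, h1, h2, e10, e01, e21, e20]
      · rw [hk]
        field_simp
      · rw [pow_right_comm, hk]
        field_simp
        linear_combination Nm 2 2 * A1 - Nm 1 1 * A2
    have hmkNk : (QuotientGroup.mk N : PGL3 K) = (QuotientGroup.mk D : PGL3 K) ^ k := by
      rw [← QuotientGroup.mk_pow]
      exact mk_eq_of_scalar N (D ^ k) (Nm 0 0) hn00 hNmat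
    rw [SetLike.mem_coe, hmkNk, hg]
    exact Subgroup.pow_mem _ (Subgroup.subset_closure (Set.mem_singleton _)) k
  · -- closure ⊆ AutQ
    intro φ hφ
    rw [SetLike.mem_coe] at hφ
    refine Subgroup.closure_induction ?_ ?_ ?_ ?_ hφ
    · intro x hx
      rw [Set.mem_singleton_iff] at hx
      subst hx
      rw [hg]
      exact hgAut
    · exact ⟨1, rfl, 1, one_ne_zero, fun v => by simp⟩
    · rintro x y hx hy ⟨M, rfl, cm, hcm, Em⟩ ⟨M', rfl, cm', hcm', Em'⟩
      refine ⟨M * M', rfl, cm * cm', mul_ne_zero hcm hcm', fun v => ?_⟩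
      have hco : ((M * M' : GL (Fin 3) K) : Matrix (Fin 3) (Fin 3) K)
          = (M : Matrix (Fin 3) (Fin 3) K) * (M' : Matrix (Fin 3) (Fin 3) K) := rfl
      rw [hco, ← Matrix.mulVec_mulVec, Em, Em', Matrix.mulVec_smul, Matrix.mulVec_mulVec,
        smul_smul]
    · rintro x hx ⟨M, rfl, cm, hcm, Em⟩
      refine ⟨M⁻¹, rfl, cm⁻¹, inv_ne_zero hcm, fun v => ?_⟩
      have hMM : (M : Matrix (Fin 3) (Fin 3) K) * ((M⁻¹ : GL (Fin 3) K) : Matrix (Fin 3) (Fin 3) K)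
          = 1 := by rw [← Units.val_mul, mul_inv_cancel, Units.val_one]
      have hMM' : ((M⁻¹ : GL (Fin 3) K) : Matrix (Fin 3) (Fin 3) K) * (M : Matrix (Fin 3) (Fin 3) K)
          = 1 := by rw [← Units.val_mul, inv_mul_cancel, Units.val_one]
      have key := Em (((M⁻¹ : GL (Fin 3) K) : Matrix (Fin 3) (Fin 3) K) *ᵥ v)
      rw [Matrix.mulVec_mulVec, hMM, Matrix.one_mulVec] at key
      rw [key, Matrix.mulVec_smul, Matrix.mulVec_mulVec, hMM', Matrix.one_mulVec, smul_smul,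
        inv_mul_cancel₀ hcm, one_smul]
end
end

section
/- Let K be an algebraically closed field of characteristic 0 and let F : K³ → K³ be the polynomial map F(X,Y,Z) = (YZ, XZ, XY). Then: (i) Aut(F) is exactly the subgroup of PGL₃(K) consisting of the classes of all matrices P·D where P is a 3×3 permutation matrix and D = diag(1, ε₁, ε₂) with ε₁, ε₂ ∈ {1, −1}; this subgroup has order 24 and is isomorphic to the symmetric group S₄. (ii) The composite satisfies F(F(X,Y,Z)) = (XYZ·X, XYZ·Y, XYZ·Z), so the square of the induced rational self-map of P² is the identity map. -/
open Matrix MvPolynomial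
open scoped Classical

noncomputable section

theorem Equiv.Perm.inv_apply_self {α : Type*} (f : Equiv.Perm α) (x : α) : f⁻¹ (f x) = x :=
  Equiv.symm_apply_apply f x

theorem Equiv.Perm.apply_inv_self {α : Type*} (f : Equiv.Perm α) (x : α) : f (f⁻¹ x) = x :=
  Equiv.apply_symm_apply f x

namespace Stmt9Aux

lemma z2_add_self (x : ZMod 2) : x + x = 0 := by revert x; decide
lemma z2_cases (x : ZMod 2) : x = 0 ∨ x = 1 := by revert x; decide

def nrm (w : Fin 3 → ZMod 2) : Fin 3 → ZMod 2 := fun i => w i + w 0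
lemma nrm_zero (w : Fin 3 → ZMod 2) : nrm w 0 = 0 := z2_add_self _
lemma nrm_eq_self {w : Fin 3 → ZMod 2} (h : w 0 = 0) : nrm w = w := by
  funext i; simp [nrm, h]

structure G0 where
  σ : Equiv.Perm (Fin 3)
  e : Fin 3 → ZMod 2
  he : e 0 = 0

theorem G0.ext' {a b : G0} (h1 : a.σ = b.σ) (h2 : a.e = b.e) : a = b := by
  cases a; cases b; simp_all

instance : One G0 := ⟨⟨1, fun _ => 0, rfl⟩⟩
instance : Mul G0 := ⟨fun a b => ⟨a.σ * b.σ, nrm (fun i => a.e (b.σ i) + b.e i), nrm_zero _⟩⟩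
instance : Inv G0 := ⟨fun a => ⟨a.σ⁻¹, nrm (fun i => a.e (a.σ⁻¹ i)), nrm_zero _⟩⟩

lemma G0.mul_sigma (a b : G0) : (a * b).σ = a.σ * b.σ := rfl
lemma G0.mul_e (a b : G0) : (a * b).e = nrm (fun i => a.e (b.σ i) + b.e i) := rfl
lemma G0.one_sigma : (1 : G0).σ = 1 := rfl
lemma G0.one_e : (1 : G0).e = fun _ => 0 := rfl
lemma G0.inv_sigma (a : G0) : (a⁻¹).σ = a.σ⁻¹ := rfl
lemma G0.inv_e (a : G0) : (a⁻¹).e = nrm (fun i => a.e (a.σ⁻¹ i)) := rfl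

instance : Group G0 where
  mul_assoc a b c := by
    refine G0.ext' (mul_assoc _ _ _) ?_
    funext i
    simp only [G0.mul_e, G0.mul_sigma, nrm, Equiv.Perm.mul_apply]
    have : ∀ A B C D E F G H : ZMod 2,
        A + B + (C + D) + E + (F + G + (C + D) + H) =
        A + (B + E + (G + H)) + (F + (G + H + (G + H))) := by decide
    exact this _ _ _ _ _ _ _ _
  one_mul a := by
    refine G0.ext' (one_mul _) ?_
    funext i
    simp only [G0.mul_e, G0.one_e, G0.one_sigma, nrm, Equiv.Perm.one_apply, zero_add, a.he, add_zero]
  mul_one a := by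
    refine G0.ext' (mul_one _) ?_
    funext i
    simp only [G0.mul_e, G0.one_e, G0.mul_sigma, G0.one_sigma, nrm, Equiv.Perm.one_apply,
      add_zero, a.he]
  inv_mul_cancel a := by
    refine G0.ext' (inv_mul_cancel _) ?_
    funext i
    simp only [G0.mul_e, G0.inv_e, G0.inv_sigma, G0.one_e, nrm, Equiv.Perm.inv_apply_self, a.he]
    have : ∀ x k : ZMod 2, x + k + x + (0 + k + 0) = 0 := by decide
    exact this _ _

end Stmt9Aux

namespace Stmt9Aux

/-! ### the four-element set and the action -/

def W : Type := {w : Fin 3 → ZMod 2 // w 0 = 0}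

instance : DecidableEq W := Subtype.instDecidableEq
instance : Fintype W := Subtype.fintype _

def tact (a : G0) (w : W) : W :=
  ⟨nrm (fun i => w.1 (a.σ⁻¹ i) + a.e (a.σ⁻¹ i)), nrm_zero _⟩

lemma tact_one (w : W) : tact 1 w = w := by
  apply Subtype.ext
  funext i
  simp only [tact, nrm, G0.one_sigma, G0.one_e, inv_one, Equiv.Perm.one_apply, add_zero, w.2]

lemma tact_mul (a b : G0) (w : W) : tact (a * b) w = tact a (tact b w) := by
  apply Subtype.ext
  funext i
  simp only [tact, nrm, G0.mul_sigma, G0.mul_e, _root_.mul_inv_rev, Equiv.Perm.mul_apply,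
    Equiv.Perm.apply_inv_self, w.2]
  have : ∀ A B C D E F G H I J : ZMod 2,
      A + (B + C + (D + E)) + (F + (G + H + (D + E))) =
      A + C + (I + J) + B + (F + H + (I + J) + G) := by decide
  exact this _ _ _ _ _ _ _ _ _ _

end Stmt9Aux

namespace Stmt9Aux

def Tperm (a : G0) : Equiv.Perm W where
  toFun := tact a
  invFun := tact a⁻¹
  left_inv w := by rw [← tact_mul, inv_mul_cancel, tact_one]
  right_inv w := by rw [← tact_mul, mul_inv_cancel, tact_one]

def Thom : G0 →* Equiv.Perm W where
  toFun := Tperm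
  map_one' := by ext w : 2; exact tact_one w
  map_mul' a b := by ext w : 2; exact tact_mul a b w

lemma sigma_eq_one_of (ρ : Equiv.Perm (Fin 3))
    (h1 : nrm (![0,1,0] ∘ ρ) = ![0,1,0]) (h2 : nrm (![0,0,1] ∘ ρ) = ![0,0,1]) : ρ = 1 := by
  revert h1 h2
  revert ρ; decide

lemma Thom_injective : Function.Injective Thom := by
  rw [injective_iff_map_eq_one]
  intro a ha
  have h0 : ∀ w : W, tact a w = w := by
    intro w
    have : Tperm a w = (1 : Equiv.Perm W) w := by rw [show Tperm a = (1 : Equiv.Perm W) from ha]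
    simpa [Tperm] using this
  -- first: a.e = 0
  have he0 : ∀ j, a.e j = 0 := by
    have h := congrArg Subtype.val (h0 ⟨fun _ => 0, rfl⟩)
    have h' : ∀ i, a.e (a.σ⁻¹ i) + a.e (a.σ⁻¹ 0) = 0 := by
      intro i
      have := congrFun h i
      simpa [tact, nrm] using this
    intro j
    have hj := h' (a.σ j)
    have h00 := h' (a.σ 0)
    simp only [Equiv.Perm.inv_apply_self] at hj h00
    have h0' : a.e (a.σ⁻¹ 0) = 0 := by
      have := a.he
      rcases z2_cases (a.e (a.σ⁻¹ 0)) with h | h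
      · exact h
      · rw [h, this] at h00; simpa using h00
    rw [h0'] at hj; simpa using hj
  -- then: σ = 1
  have hσ : a.σ⁻¹ = 1 := by
    apply sigma_eq_one_of
    · have h := congrArg Subtype.val (h0 ⟨![0,1,0], rfl⟩)
      funext i
      have := congrFun h i
      simpa [tact, nrm, he0, Function.comp] using this
    · have h := congrArg Subtype.val (h0 ⟨![0,0,1], rfl⟩)
      funext i
      have := congrFun h i
      simpa [tact, nrm, he0, Function.comp] using this
  refine G0.ext' ?_ ?_
  · have := congrArg Inv.inv hσ; simpa [G0.one_sigma] using this
  · funext j; exact he0 j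

def G0equiv : G0 ≃ Equiv.Perm (Fin 3) × W where
  toFun a := (a.σ, ⟨a.e, a.he⟩)
  invFun p := ⟨p.1, p.2.1, p.2.2⟩
  left_inv a := rfl
  right_inv p := rfl

instance : Fintype G0 := Fintype.ofEquiv _ G0equiv.symm

lemma card_W : Fintype.card W = 4 := by decide

lemma card_G0 : Fintype.card G0 = 24 := by
  rw [Fintype.card_congr G0equiv]
  simp [card_W, Fintype.card_perm, Nat.factorial]

lemma Thom_bijective : Function.Bijective Thom := by
  rw [Fintype.bijective_iff_injective_and_card]
  exact ⟨Thom_injective, by simp [card_G0, Fintype.card_perm, card_W, Nat.factorial]⟩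

/-- permCongr as a MulEquiv -/
def permGroupCongr {α β : Type*} (e : α ≃ β) : Equiv.Perm α ≃* Equiv.Perm β :=
  { Equiv.permCongr e with
    map_mul' := fun p q => by ext x; simp [Equiv.permCongr_apply] }

noncomputable def G0mulEquiv : G0 ≃* Equiv.Perm (Fin 4) :=
  (MulEquiv.ofBijective Thom Thom_bijective).trans
    (permGroupCongr (Fintype.equivFinOfCardEq card_W))

end Stmt9Aux

namespace Stmt9Aux

variable {K : Type*} [Field K]

theorem mem_center_GL_iff {n : Type*} [DecidableEq n] [Fintype n] {A : GL n K} :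
    A ∈ Subgroup.center (GL n K) ↔ ∃ a : K, (A : Matrix n n K) = a • (1 : Matrix n n K) := by
  constructor
  · intro hA
    have hcomm : Pairwise fun i j : n => Commute (Matrix.single i j 1) (A : Matrix n n K) := by
      intro i j hij
      have hdet : (Matrix.transvection i j (1:K)).det ≠ 0 := by
        rw [Matrix.det_transvection_of_ne i j hij]; exact one_ne_zero
      have := Subgroup.mem_center_iff.mp hA (Matrix.GeneralLinearGroup.mkOfDetNeZero _ hdet)
      have h2 : (Matrix.transvection i j (1:K)) * (A : Matrix n n K)
          = (A : Matrix n n K) * (Matrix.transvection i j (1:K)) := by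
        have := congrArg (Units.val) this
        simpa [Matrix.GeneralLinearGroup.mkOfDetNeZero] using this
      have : (1 + Matrix.single i j (1:K)) * (A : Matrix n n K)
          = (A : Matrix n n K) * (1 + Matrix.single i j (1:K)) := by
        simpa [Matrix.transvection] using h2
      unfold Commute SemiconjBy
      rw [add_mul, mul_add, one_mul, mul_one] at this
      exact add_left_cancel this
    obtain ⟨a, ha⟩ := Matrix.mem_range_scalar_of_commute_single hcomm
    exact ⟨a, by rw [← ha]; simp [Matrix.scalar_apply, Matrix.smul_one_eq_diagonal]⟩
  · rintro ⟨a, ha⟩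
    rw [Subgroup.mem_center_iff]
    intro g
    apply Units.ext
    push_cast
    rw [ha]
    simp [mul_smul_comm, smul_mul_assoc]

theorem mk_eq_mk {M N : GL (Fin 3) K} :
    (QuotientGroup.mk M : PGL3 K) = QuotientGroup.mk N ↔
      ∃ a : K, a ≠ 0 ∧ (N : Matrix (Fin 3) (Fin 3) K) = a • (M : Matrix (Fin 3) (Fin 3) K) := by
  rw [QuotientGroup.eq, mem_center_GL_iff]
  have hval : ((M⁻¹ * N : GL (Fin 3) K) : Matrix (Fin 3) (Fin 3) K)
      = (↑M⁻¹ : Matrix (Fin 3) (Fin 3) K) * (N : Matrix (Fin 3) (Fin 3) K) := rfl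
  have hMM : (M : Matrix (Fin 3) (Fin 3) K) * (↑M⁻¹ : Matrix (Fin 3) (Fin 3) K) = 1 := by
    rw [← Units.val_mul, mul_inv_cancel, Units.val_one]
  have hMM' : (↑M⁻¹ : Matrix (Fin 3) (Fin 3) K) * (M : Matrix (Fin 3) (Fin 3) K) = 1 := by
    rw [← Units.val_mul, inv_mul_cancel, Units.val_one]
  constructor
  · rintro ⟨a, ha⟩
    rw [hval] at ha
    have hN : (N : Matrix (Fin 3) (Fin 3) K) = a • (M : Matrix (Fin 3) (Fin 3) K) := by
      have := congrArg (fun X => (M : Matrix (Fin 3) (Fin 3) K) * X) ha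
      simpa only [← mul_assoc, hMM, one_mul, mul_one, Matrix.mul_smul] using this
    refine ⟨a, ?_, hN⟩
    rintro rfl
    have hud : IsUnit (N : Matrix (Fin 3) (Fin 3) K).det :=
      (Matrix.isUnit_iff_isUnit_det _).mp ⟨N, rfl⟩
    rw [hN] at hud
    simp at hud
  · rintro ⟨a, -, hN⟩
    refine ⟨a, ?_⟩
    rw [hval, hN]
    simp only [Matrix.mul_smul, hMM']

/-- sign of an exponent -/
def sgn (K : Type*) [Field K] (x : ZMod 2) : K := if x = 0 then 1 else -1

lemma sgn_zero : sgn K 0 = 1 := rfl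
lemma sgn_ne_zero (x : ZMod 2) : sgn K x ≠ 0 := by
  rcases z2_cases x with h | h <;> rw [h] <;> simp [sgn]
lemma sgn_add (x y : ZMod 2) : sgn K (x + y) = sgn K x * sgn K y := by
  rcases z2_cases x with h | h <;> rcases z2_cases y with h' | h' <;> rw [h, h'] <;>
    simp [sgn, show (1+1:ZMod 2) = 0 from rfl, show (1:ZMod 2) ≠ 0 by decide] <;> norm_num
lemma sgn_mul_self (x : ZMod 2) : sgn K x * sgn K x = 1 := by
  rw [← sgn_add, z2_add_self, sgn_zero]
lemma sgn_inj [CharZero K] {x y : ZMod 2} (h : sgn K x = sgn K y) : x = y := by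
  rcases z2_cases x with hx | hx <;> rcases z2_cases y with hy | hy <;>
      rw [hx, hy] at h ⊢ <;> simp [sgn] at h ⊢
  · exact absurd h.symm (by norm_num)
  · exact absurd h (by norm_num)

lemma permMatrix_apply (σ : Equiv.Perm (Fin 3)) (i j : Fin 3) :
    σ.permMatrix K i j = if σ i = j then 1 else 0 := by
  show σ.toPEquiv.toMatrix i j = _
  rw [PEquiv.toMatrix_toPEquiv_apply, Pi.single_apply]
  simp only [eq_comm]

lemma mulVec_single_old (M : Matrix (Fin 3) (Fin 3) K) (j : Fin 3) (x : K) :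
    M *ᵥ Pi.single j x = fun i => M i j * x := by
  funext i; simp [Matrix.mulVec, dotProduct_single]

lemma permMatrix_mulVec (σ : Equiv.Perm (Fin 3)) (v : Fin 3 → K) :
    σ.permMatrix K *ᵥ v = fun i => v (σ i) := by
  funext i
  simp [Matrix.mulVec, dotProduct, Matrix.one_apply, PEquiv.toMatrix_toPEquiv_apply,
    Equiv.toPEquiv_apply]

lemma perm_mul_perm (σ τ : Equiv.Perm (Fin 3)) :
    (σ.permMatrix K) * (τ.permMatrix K) = (τ * σ).permMatrix K := by
  show _ = ((σ.trans τ).toPEquiv).toMatrix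
  rw [Equiv.toPEquiv_trans, PEquiv.toMatrix_trans]

lemma diagonal_mul_permMatrix (d : Fin 3 → K) (ρ : Equiv.Perm (Fin 3)) :
    Matrix.diagonal d * ρ.permMatrix K
      = ρ.permMatrix K * Matrix.diagonal (fun i => d (ρ⁻¹ i)) := by
  ext i j
  rw [Matrix.diagonal_mul, Matrix.mul_diagonal, permMatrix_apply]
  by_cases h : ρ i = j
  · subst h; simp
  · simp [h]

lemma det_permMatrix_ne_zero (σ : Equiv.Perm (Fin 3)) : (σ.permMatrix K).det ≠ 0 := by
  rw [Matrix.det_permutation]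
  rcases Int.units_eq_one_or (Equiv.Perm.sign σ) with h | h <;> rw [h] <;> norm_num

/-! ### the polynomial map F -/

def Fmap (K : Type*) [Field K] : (Fin 3 → K) → (Fin 3 → K) :=
  fun v => ![v 1 * v 2, v 0 * v 2, v 0 * v 1]

lemma Fmap_apply (v : Fin 3 → K) (i : Fin 3) : Fmap K v i = v (i + 1) * v (i + 2) := by
  fin_cases i <;> simp [Fmap] <;> ring

lemma perm_shift : ∀ (σ : Equiv.Perm (Fin 3)) (i : Fin 3),
    (σ (i+1) = σ i + 1 ∧ σ (i+2) = σ i + 2) ∨ (σ (i+1) = σ i + 2 ∧ σ (i+2) = σ i + 1) := by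
  decide

lemma Fmap_perm (σ : Equiv.Perm (Fin 3)) (v : Fin 3 → K) :
    Fmap K (fun i => v (σ i)) = fun i => Fmap K v (σ i) := by
  funext i
  rw [Fmap_apply, Fmap_apply]
  rcases perm_shift σ i with ⟨h1, h2⟩ | ⟨h1, h2⟩ <;> rw [h1, h2] <;> ring

lemma Fmap_diag (d v : Fin 3 → K) :
    Fmap K (fun i => d i * v i) = fun i => (d (i+1) * d (i+2)) * Fmap K v i := by
  funext i
  rw [Fmap_apply, Fmap_apply]
  ring

lemma Fmap_single (a : Fin 3) : Fmap K (Pi.single a 1) = 0 := by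
  fin_cases a <;> funext j <;> fin_cases j <;>
    simp [Fmap, Pi.single_apply]

lemma Fmap_pair (a : Fin 3) :
    Fmap K (Pi.single (a+1) 1 + Pi.single (a+2) 1) = Pi.single a 1 := by
  fin_cases a <;> funext j <;> fin_cases j <;>
    simp [Fmap, Pi.single_apply]

/-! ### the homomorphism theta -/

def dvec (K : Type*) [Field K] (a : G0) : Fin 3 → K := fun i => sgn K (a.e i)

lemma dvec_ne_zero (a : G0) (i : Fin 3) : dvec K a i ≠ 0 := sgn_ne_zero _

def mat (K : Type*) [Field K] (a : G0) : Matrix (Fin 3) (Fin 3) K :=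
  (a.σ⁻¹.permMatrix K) * Matrix.diagonal (dvec K a)

lemma det_mat_ne_zero (a : G0) : (mat K a).det ≠ 0 := by
  rw [mat, Matrix.det_mul, Matrix.det_diagonal]
  exact mul_ne_zero (det_permMatrix_ne_zero _)
    (Finset.prod_ne_zero_iff.mpr fun i _ => dvec_ne_zero a i)

def matGL (K : Type*) [Field K] (a : G0) : GL (Fin 3) K :=
  Matrix.GeneralLinearGroup.mkOfDetNeZero (mat K a) (det_mat_ne_zero a)

lemma matGL_coe (a : G0) : (matGL K a : Matrix (Fin 3) (Fin 3) K) = mat K a := rfl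

lemma mat_one : mat K 1 = 1 := by
  rw [mat, G0.one_sigma]
  have h1 : ((1 : Equiv.Perm (Fin 3))⁻¹.permMatrix K) = 1 := by
    rw [inv_one]
    show ((1 : Equiv.Perm (Fin 3)).toPEquiv).toMatrix = 1
    rw [Equiv.Perm.one_def, Equiv.toPEquiv_refl, PEquiv.toMatrix_refl]
  have h2 : Matrix.diagonal (dvec K 1) = 1 := by
    have : dvec K 1 = fun _ => 1 := by
      funext i; simp [dvec, G0.one_e, sgn_zero]
    rw [this]
    exact Matrix.diagonal_one
  rw [h1, h2, one_mul]

lemma mat_mul (a b : G0) :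
    mat K a * mat K b = sgn K (a.e (b.σ 0)) • mat K (a * b) := by
  have key : mat K a * mat K b
      = ((a * b).σ⁻¹.permMatrix K) *
        Matrix.diagonal (fun i => sgn K (a.e (b.σ i) + b.e i)) := by
    rw [mat, mat, mul_assoc, ← mul_assoc (Matrix.diagonal (dvec K a)),
      diagonal_mul_permMatrix, mul_assoc, Matrix.diagonal_mul_diagonal, ← mul_assoc,
      perm_mul_perm]
    have hσ : (b.σ⁻¹ * a.σ⁻¹) = (a * b).σ⁻¹ := by
      rw [G0.mul_sigma, _root_.mul_inv_rev]
    rw [hσ]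
    congr 1
    funext i
    rw [inv_inv]
    simp only [dvec, sgn_add]
  rw [key, mat, ← Matrix.mul_smul]
  have harg : (fun i => sgn K (a.e (b.σ i) + b.e i))
      = sgn K (a.e (b.σ 0)) • dvec K (a * b) := by
    funext i
    simp only [Pi.smul_apply, smul_eq_mul, dvec, G0.mul_e, nrm]
    rw [b.he, add_zero, sgn_add (a.e (b.σ i) + b.e i) (a.e (b.σ 0)), mul_left_comm,
      sgn_mul_self, mul_one]
  rw [harg, Matrix.diagonal_smul]

def theta (K : Type*) [Field K] : G0 →* PGL3 K where
  toFun a := QuotientGroup.mk (matGL K a)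
  map_one' := by
    show QuotientGroup.mk (matGL K 1) = 1
    have : matGL K 1 = 1 := by
      apply Units.ext
      rw [matGL_coe, mat_one, Units.val_one]
    rw [this, QuotientGroup.mk_one]
  map_mul' a b := by
    show _ = QuotientGroup.mk (matGL K a * matGL K b)
    rw [mk_eq_mk]
    refine ⟨sgn K (a.e (b.σ 0)), sgn_ne_zero _, ?_⟩
    show (matGL K a : Matrix (Fin 3) (Fin 3) K) * (matGL K b : Matrix (Fin 3) (Fin 3) K) = _
    rw [matGL_coe, matGL_coe, matGL_coe, mat_mul]

lemma theta_injective [CharZero K] : Function.Injective (theta K) := by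
  intro a b hab
  obtain ⟨s, hs, heq⟩ :=
    mk_eq_mk.mp (hab : QuotientGroup.mk (matGL K a) = QuotientGroup.mk (matGL K b))
  rw [matGL_coe, matGL_coe, mat, mat] at heq
  have hent : ∀ i j, (if b.σ⁻¹ i = j then (1:K) else 0) * dvec K b j
      = s * ((if a.σ⁻¹ i = j then 1 else 0) * dvec K a j) := by
    intro i j
    have h1 := congrFun (congrFun heq i) j
    rw [Matrix.smul_apply, Matrix.mul_diagonal, Matrix.mul_diagonal, permMatrix_apply,
      permMatrix_apply, smul_eq_mul] at h1
    exact h1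
  have hσinv : a.σ⁻¹ = b.σ⁻¹ := by
    apply Equiv.ext
    intro i
    have h := hent i (b.σ⁻¹ i)
    rw [if_pos rfl, one_mul] at h
    by_contra hne
    rw [if_neg hne, zero_mul, mul_zero] at h
    exact dvec_ne_zero b _ h
  have hb0 : dvec K b 0 = 1 := by
    show sgn K (b.e 0) = 1
    rw [b.he, sgn_zero]
  have ha0 : dvec K a 0 = 1 := by
    show sgn K (a.e 0) = 1
    rw [a.he, sgn_zero]
  have hs1 : s = 1 := by
    have h := hent (b.σ 0) 0
    rw [hσinv, if_pos (Equiv.Perm.inv_apply_self _ _), one_mul, one_mul, hb0, ha0,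
      mul_one] at h
    exact h.symm
  have he : a.e = b.e := by
    funext j
    have h := hent (b.σ j) j
    rw [hσinv, if_pos (Equiv.Perm.inv_apply_self _ _), one_mul, one_mul, hs1, one_mul] at h
    exact (sgn_inj h.symm)
  have hσ : a.σ = b.σ := by rw [← inv_inv a.σ, hσinv, inv_inv]
  exact G0.ext' hσ he

/-! ### theta range is contained in AutQ -/

lemma dvec_rel (a : G0) (j : Fin 3) :
    dvec K a (j+1) * dvec K a (j+2) = sgn K (a.e 1 + a.e 2) * dvec K a j := by
  show sgn K (a.e (j+1)) * sgn K (a.e (j+2)) = _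
  rw [← sgn_add]
  show _ = sgn K (a.e 1 + a.e 2) * sgn K (a.e j)
  rw [← sgn_add]
  congr 1
  have h0 := a.he
  fin_cases j
  · show a.e (0+1) + a.e (0+2) = a.e 1 + a.e 2 + a.e 0
    rw [h0, add_zero]
    norm_num
  · show a.e (1+1) + a.e (1+2) = a.e 1 + a.e 2 + a.e 1
    have : (1+1 : Fin 3) = 2 := rfl
    have h2 : (1+2 : Fin 3) = 0 := rfl
    rw [this, h2, h0]
    have := z2_add_self (a.e 1)
    rw [add_zero]
    rw [add_comm (a.e 1) (a.e 2), add_assoc, this, add_zero]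
  · show a.e (2+1) + a.e (2+2) = a.e 1 + a.e 2 + a.e 2
    have h1 : (2+1 : Fin 3) = 0 := rfl
    have h2 : (2+2 : Fin 3) = 1 := rfl
    rw [h1, h2, h0, zero_add, add_assoc, z2_add_self, add_zero]

lemma mat_mulVec (a : G0) (w : Fin 3 → K) :
    mat K a *ᵥ w = fun i => dvec K a (a.σ⁻¹ i) * w (a.σ⁻¹ i) := by
  rw [mat, ← Matrix.mulVec_mulVec, permMatrix_mulVec]
  funext i
  rw [Matrix.mulVec_diagonal]

lemma mat_equivariant (a : G0) (v : Fin 3 → K) :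
    Fmap K (mat K a *ᵥ v) = sgn K (a.e 1 + a.e 2) • (mat K a *ᵥ Fmap K v) := by
  rw [mat_mulVec, mat_mulVec]
  have h1 : (fun i => dvec K a (a.σ⁻¹ i) * v (a.σ⁻¹ i))
      = fun i => (fun j => dvec K a j * v j) (a.σ⁻¹ i) := rfl
  rw [h1, Fmap_perm a.σ⁻¹ (fun j => dvec K a j * v j)]
  funext i
  rw [congrFun (Fmap_diag (dvec K a) v) (a.σ⁻¹ i), Pi.smul_apply, smul_eq_mul,
    dvec_rel a (a.σ⁻¹ i)]
  ring

lemma theta_mem_AutQ (a : G0) : theta K a ∈ AutQ (Fmap K) := by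
  refine ⟨matGL K a, rfl, sgn K (a.e 1 + a.e 2), sgn_ne_zero _, ?_⟩
  intro v
  have := mat_equivariant a v
  rw [matGL_coe]
  exact this

/-! ### classification : AutQ ⊆ S -/

lemma pair_index : ∀ i j : Fin 3, i ≠ j →
    ∃ k : Fin 3, (i = k+1 ∧ j = k+2) ∨ (i = k+2 ∧ j = k+1) := by decide

lemma autq_sub_S [CharZero K] :
    AutQ (Fmap K) ⊆ {x : PGL3 K | ∃ (σ : Equiv.Perm (Fin 3)) (ε₁ ε₂ : K),
      (ε₁ = 1 ∨ ε₁ = -1) ∧ (ε₂ = 1 ∨ ε₂ = -1) ∧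
      x = toPGL3 (σ.permMatrix K * Matrix.diagonal ![1, ε₁, ε₂])} := by
  rintro φ ⟨M, rfl, c, hc, h⟩
  set A : Matrix (Fin 3) (Fin 3) K := (M : Matrix (Fin 3) (Fin 3) K) with hA
  have hdet : A.det ≠ 0 := ((Matrix.isUnit_iff_isUnit_det A).mp ⟨M, rfl⟩).ne_zero
  -- columns are mapped to zero by F
  have hcol0 : ∀ a : Fin 3, Fmap K (fun i => A i a) = 0 := by
    intro a
    have hv := h (Pi.single a 1)
    rw [Fmap_single, Matrix.mulVec_zero, smul_zero, mulVec_single_old] at hv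
    have : (fun i => A i a * 1) = fun i => A i a := by funext i; rw [mul_one]
    rwa [this] at hv
  -- pairwise products of entries of a column vanish
  have hprod : ∀ (a i j : Fin 3), i ≠ j → A i a * A j a = 0 := by
    intro a i j hij
    obtain ⟨k, hk⟩ := pair_index i j hij
    have h0 := congrFun (hcol0 a) k
    rw [Fmap_apply, Pi.zero_apply] at h0
    rcases hk with ⟨rfl, rfl⟩ | ⟨rfl, rfl⟩
    · exact h0
    · rw [mul_comm]; exact h0
  -- each column has a unique nonzero entry
  have hexists : ∀ a : Fin 3, ∃ i, A i a ≠ 0 ∧ ∀ j, j ≠ i → A j a = 0 := by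
    intro a
    have hnz : ∃ i, A i a ≠ 0 := by
      by_contra hno
      push_neg at hno
      exact hdet (Matrix.det_eq_zero_of_column_eq_zero a hno)
    obtain ⟨i, hi⟩ := hnz
    refine ⟨i, hi, fun j hj => ?_⟩
    rcases mul_eq_zero.mp (hprod a i j (Ne.symm hj)) with h' | h'
    · exact absurd h' hi
    · exact h'
  choose r hr1 hr2 using hexists
  -- r is injective
  have hrinj : Function.Injective r := by
    intro a b hab
    by_contra hne
    apply hdet
    rw [← Matrix.exists_mulVec_eq_zero_iff]
    refine ⟨Pi.single a (A (r a) b) - Pi.single b (A (r a) a), ?_, ?_⟩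
    · intro h0
      have := congrFun h0 b
      rw [Pi.sub_apply, Pi.zero_apply, Pi.single_apply, Pi.single_apply,
        if_neg (fun hh => hne hh.symm), if_pos rfl] at this
      rw [zero_sub, neg_eq_zero] at this
      exact hr1 a this
    · rw [Matrix.mulVec_sub, mulVec_single_old, mulVec_single_old]
      funext j
      rw [Pi.sub_apply, Pi.zero_apply]
      by_cases hj : j = r a
      · subst hj
        rw [hab]
        ring
      · rw [hr2 a j hj, hr2 b j (fun hh => hj (hh.trans hab.symm)), zero_mul, zero_mul, sub_zero]
  have hrbij : Function.Bijective r := Finite.injective_iff_bijective.mp hrinj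
  set p : Equiv.Perm (Fin 3) := Equiv.ofBijective r hrbij with hp
  set q : Equiv.Perm (Fin 3) := p.symm with hq
  have hpapp : ∀ a, p a = r a := fun a => rfl
  set d : Fin 3 → K := fun a => A (r a) a with hd
  have hdne : ∀ a, d a ≠ 0 := hr1
  -- A = P * D
  have hAeq : A = (q.permMatrix K) * Matrix.diagonal d := by
    ext i j
    rw [Matrix.mul_diagonal, permMatrix_apply]
    by_cases hip : q i = j
    · have hij : i = r j := by rw [← hip, hq, ← hpapp, Equiv.apply_symm_apply]
      rw [if_pos hip, one_mul, hij]
    · have hij : i ≠ r j := by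
        intro hh
        apply hip
        rw [hh, ← hpapp, Equiv.symm_apply_apply]
      rw [if_neg hip, zero_mul, hr2 j i hij]
  -- key relations
  have hPD : ∀ w : Fin 3 → K, (q.permMatrix K * Matrix.diagonal d) *ᵥ w
      = fun i => d (q i) * w (q i) := by
    intro w
    rw [← Matrix.mulVec_mulVec, permMatrix_mulVec]
    funext i
    rw [Matrix.mulVec_diagonal]
  have hkey : ∀ j : Fin 3, d (j+1) * d (j+2) = c * d j := by
    intro j
    set pairfn : Fin 3 → K := (Pi.single (j+1) (1:K) + Pi.single (j+2) (1:K)) with hpair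
    have hqp : q (p j) = j := by rw [hq]; exact Equiv.symm_apply_apply p j
    have hv := h pairfn
    rw [Fmap_pair, hAeq] at hv
    have hv2 := congrFun hv (p j)
    have lhs1 : Fmap K ((q.permMatrix K * Matrix.diagonal d) *ᵥ pairfn) (p j)
        = Fmap K (fun i => d (q i) * pairfn (q i)) (p j) := by rw [hPD]
    have lhs2 : Fmap K (fun i => d (q i) * pairfn (q i)) (p j)
        = Fmap K (fun k => d k * pairfn k) (q (p j)) :=
      congrFun (Fmap_perm q (fun k => d k * pairfn k)) (p j)
    have lhs3 : Fmap K (fun k => d k * pairfn k) (q (p j))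
        = (d (j+1) * d (j+2)) * Fmap K pairfn j := by
      rw [hqp]
      exact congrFun (Fmap_diag d pairfn) j
    have lhs4 : Fmap K pairfn j = 1 := by
      rw [hpair]
      rw [congrFun (Fmap_pair j) j]
      exact Pi.single_eq_same j 1
    have rhs1 : (c • ((q.permMatrix K * Matrix.diagonal d) *ᵥ Pi.single j (1:K))) (p j)
        = c * (d (q (p j)) * (Pi.single j (1:K) : Fin 3 → K) (q (p j))) := by
      rw [hPD]
      rfl
    rw [lhs1, lhs2, lhs3, lhs4, rhs1, hqp, Pi.single_eq_same, mul_one, mul_one] at hv2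
    exact hv2
  -- the three relations give the sign structure
  have k0 : d 1 * d 2 = c * d 0 := by
    have := hkey 0
    norm_num at this
    exact this
  have k1 : d 2 * d 0 = c * d 1 := by
    have := hkey 1
    rw [show (1+1 : Fin 3) = 2 from rfl, show (1+2 : Fin 3) = 0 from rfl] at this
    exact this
  have k2 : d 0 * d 1 = c * d 2 := by
    have := hkey 2
    rw [show (2+1 : Fin 3) = 0 from rfl, show (2+2 : Fin 3) = 1 from rfl] at this
    exact this
  have hsq1 : d 1 * d 1 = d 0 * d 0 := by
    have e1 : c * (d 1 * d 1) = c * (d 0 * d 0) := by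
      calc c * (d 1 * d 1) = (c * d 1) * d 1 := by ring
        _ = (d 2 * d 0) * d 1 := by rw [k1]
        _ = (d 1 * d 2) * d 0 := by ring
        _ = (c * d 0) * d 0 := by rw [k0]
        _ = c * (d 0 * d 0) := by ring
    exact mul_left_cancel₀ hc e1
  have hsq2 : d 2 * d 2 = d 0 * d 0 := by
    have e1 : c * (d 2 * d 2) = c * (d 0 * d 0) := by
      calc c * (d 2 * d 2) = (c * d 2) * d 2 := by ring
        _ = (d 0 * d 1) * d 2 := by rw [k2]
        _ = (d 1 * d 2) * d 0 := by ring
        _ = (c * d 0) * d 0 := by rw [k0]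
        _ = c * (d 0 * d 0) := by ring
    exact mul_left_cancel₀ hc e1
  have hd0 : d 0 ≠ 0 := hdne 0
  set ε₁ : K := d 1 * (d 0)⁻¹ with hε₁
  set ε₂ : K := d 2 * (d 0)⁻¹ with hε₂
  have hsgn : ∀ x : K, x * x = d 0 * d 0 → x * (d 0)⁻¹ = 1 ∨ x * (d 0)⁻¹ = -1 := by
    intro x hx
    have h1 : (x * (d 0)⁻¹ - 1) * (x * (d 0)⁻¹ + 1) = 0 := by
      field_simp
      linear_combination hx
    rcases mul_eq_zero.mp h1 with h' | h'
    · exact Or.inl (sub_eq_zero.mp h')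
    · exact Or.inr (eq_neg_of_add_eq_zero_left h')
  refine ⟨q, ε₁, ε₂, hsgn _ hsq1, hsgn _ hsq2, ?_⟩
  -- target matrix
  have hvec : ![(1:K), ε₁, ε₂] = (d 0)⁻¹ • d := by
    funext i
    fin_cases i
    · show (1:K) = (d 0)⁻¹ * d 0
      rw [inv_mul_cancel₀ hd0]
    · show ε₁ = (d 0)⁻¹ * d 1
      rw [hε₁]; ring
    · show ε₂ = (d 0)⁻¹ * d 2
      rw [hε₂]; ring
  have hdet2 : (q.permMatrix K * Matrix.diagonal ![(1:K), ε₁, ε₂]).det ≠ 0 := by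
    rw [Matrix.det_mul, Matrix.det_diagonal]
    refine mul_ne_zero (det_permMatrix_ne_zero _) ?_
    rw [Fin.prod_univ_three]
    simp only [Matrix.cons_val_zero, Matrix.cons_val_one, Matrix.head_cons, Matrix.cons_val_two]
    rcases hsgn _ hsq1 with h'|h' <;> rcases hsgn _ hsq2 with h''|h'' <;>
      rw [← hε₁] at h' <;> rw [← hε₂] at h'' <;> rw [h', h''] <;> norm_num
  rw [toPGL3, dif_pos hdet2]
  rw [mk_eq_mk]
  refine ⟨(d 0)⁻¹, inv_ne_zero hd0, ?_⟩
  show (q.permMatrix K * Matrix.diagonal ![(1:K), ε₁, ε₂]) = (d 0)⁻¹ • A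
  rw [hvec, hAeq, Matrix.diagonal_smul, Matrix.mul_smul]

lemma theta_eq_toPGL3 (a : G0) : theta K a = toPGL3 (mat K a) := by
  rw [toPGL3, dif_pos (det_mat_ne_zero a)]
  rfl

lemma range_eq_S [CharZero K] : ((theta K).range : Set (PGL3 K))
    = {x : PGL3 K | ∃ (σ : Equiv.Perm (Fin 3)) (ε₁ ε₂ : K),
        (ε₁ = 1 ∨ ε₁ = -1) ∧ (ε₂ = 1 ∨ ε₂ = -1) ∧
        x = toPGL3 (σ.permMatrix K * Matrix.diagonal ![1, ε₁, ε₂])} := by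
  ext x
  constructor
  · rintro ⟨a, rfl⟩
    refine ⟨a.σ⁻¹, sgn K (a.e 1), sgn K (a.e 2), ?_, ?_, ?_⟩
    · rcases z2_cases (a.e 1) with h | h <;> rw [h]
      · exact Or.inl rfl
      · exact Or.inr rfl
    · rcases z2_cases (a.e 2) with h | h <;> rw [h]
      · exact Or.inl rfl
      · exact Or.inr rfl
    · have hdv : dvec K a = ![1, sgn K (a.e 1), sgn K (a.e 2)] := by
        funext i
        fin_cases i
        · show sgn K (a.e 0) = 1
          rw [a.he]; rfl
        · rfl
        · rfl
      rw [theta_eq_toPGL3, mat, hdv]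
  · rintro ⟨σ, ε₁, ε₂, h1, h2, rfl⟩
    obtain ⟨x1, hx1⟩ : ∃ x1 : ZMod 2, sgn K x1 = ε₁ := by
      rcases h1 with h | h
      · exact ⟨0, by rw [h]; rfl⟩
      · exact ⟨1, by rw [h]; rfl⟩
    obtain ⟨x2, hx2⟩ : ∃ x2 : ZMod 2, sgn K x2 = ε₂ := by
      rcases h2 with h | h
      · exact ⟨0, by rw [h]; rfl⟩
      · exact ⟨1, by rw [h]; rfl⟩
    refine ⟨⟨σ⁻¹, ![0, x1, x2], rfl⟩, ?_⟩
    set a : G0 := ⟨σ⁻¹, ![0, x1, x2], rfl⟩ with ha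
    have hdv : dvec K a = ![1, ε₁, ε₂] := by
      funext i
      fin_cases i
      · show sgn K ((0 : ZMod 2)) = 1
        rfl
      · show sgn K x1 = ε₁
        exact hx1
      · show sgn K x2 = ε₂
        exact hx2
    have hσ2 : a.σ⁻¹ = σ := by
      show σ⁻¹⁻¹ = σ
      rw [inv_inv]
    rw [theta_eq_toPGL3, mat, hdv, hσ2]

end Stmt9Aux

open Stmt9Aux in
theorem stmt9 {K : Type*} [Field K] [IsAlgClosed K] [CharZero K] :
    let F : (Fin 3 → K) → (Fin 3 → K) := fun v => ![v 1 * v 2, v 0 * v 2, v 0 * v 1]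
    (∃ H : Subgroup (PGL3 K),
        (H : Set (PGL3 K)) = AutQ F ∧
        (H : Set (PGL3 K)) =
          {x | ∃ (σ : Equiv.Perm (Fin 3)) (ε₁ ε₂ : K),
            (ε₁ = 1 ∨ ε₁ = -1) ∧ (ε₂ = 1 ∨ ε₂ = -1) ∧
            x = toPGL3 (σ.permMatrix K * Matrix.diagonal ![1, ε₁, ε₂])} ∧
        Nat.card H = 24 ∧ Nonempty (H ≃* Equiv.Perm (Fin 4))) ∧
      ∀ v : Fin 3 → K, F (F v) = (v 0 * v 1 * v 2) • v := by
  intro F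
  have hF : F = Fmap K := rfl
  rw [hF]
  constructor
  · refine ⟨(theta K).range, ?_, ?_, ?_, ?_⟩
    · apply Set.Subset.antisymm
      · rintro x ⟨a, rfl⟩
        exact theta_mem_AutQ a
      · intro x hx
        have hx2 := autq_sub_S hx
        rw [← range_eq_S] at hx2
        exact hx2
    · exact range_eq_S
    · have hcard := Nat.card_congr (MonoidHom.ofInjective (theta_injective (K := K))).toEquiv
      rw [← hcard, Nat.card_eq_fintype_card, card_G0]
    · exact ⟨(MonoidHom.ofInjective (theta_injective (K := K))).symm.trans G0mulEquiv⟩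
  · intro v
    funext i
    fin_cases i <;> simp [Fmap, Pi.smul_apply, smul_eq_mul] <;> ring
end
end

section
/- Let K be an algebraically closed field of characteristic 0, let e ∈ K with e ≠ 0, let F : K³ → K³ be the polynomial map F(X,Y,Z) = (Y² − Z², XY, eXZ), and for k ≥ 0 set U_k = Y² − e^{2k}Z² ∈ K[X,Y,Z]. Then for every n ≥ 1 there exists a nonzero homogeneous polynomial h ∈ K[X,Y,Z] such that the n-fold composite Fⁿ = F∘⋯∘F satisfies: if n is even, Fⁿ(X,Y,Z) = (h·X·U₁U₃⋯U_{n−1}, h·Y·U₀U₂⋯U_{n−2}, h·eⁿ·Z·U₀U₂⋯U_{n−2}); and if n is odd, Fⁿ(X,Y,Z) = (h·U₀U₂⋯U_{n−1}, h·XY·U₁U₃⋯U_{n−2}, h·eⁿ·XZ·U₁U₃⋯U_{n−2}). -/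
open Matrix MvPolynomial
open scoped Classical

noncomputable section

theorem stmt12 {K : Type*} [Field K] [IsAlgClosed K] [CharZero K]
    (e : K) (he : e ≠ 0) :
    let P : Fin 3 → MvPolynomial (Fin 3) K :=
      ![X 1 ^ 2 - X 2 ^ 2, X 0 * X 1, C e * (X 0 * X 2)]
    let U : ℕ → MvPolynomial (Fin 3) K := fun k => X 1 ^ 2 - C (e ^ (2 * k)) * X 2 ^ 2
    ∀ n : ℕ, 1 ≤ n →
      ∃ (h : MvPolynomial (Fin 3) K) (dd : ℕ), h ≠ 0 ∧ h.IsHomogeneous dd ∧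
        (Even n →
          iterComp P n 0 = h * (X 0 * ∏ j ∈ Finset.range (n / 2), U (2 * j + 1)) ∧
          iterComp P n 1 = h * (X 1 * ∏ j ∈ Finset.range (n / 2), U (2 * j)) ∧
          iterComp P n 2 =
            h * (C (e ^ n) * X 2 * ∏ j ∈ Finset.range (n / 2), U (2 * j))) ∧
        (¬ Even n →
          iterComp P n 0 = h * ∏ j ∈ Finset.range ((n + 1) / 2), U (2 * j) ∧
          iterComp P n 1 =
            h * (X 0 * X 1 * ∏ j ∈ Finset.range (n / 2), U (2 * j + 1)) ∧
          iterComp P n 2 =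
            h * (C (e ^ n) * (X 0 * X 2) * ∏ j ∈ Finset.range (n / 2), U (2 * j + 1))) := by
  intro P U
  have hP0 : P 0 = X 1 ^ 2 - X 2 ^ 2 := rfl
  have hP1 : P 1 = X 0 * X 1 := rfl
  have hP2 : P 2 = C e * (X 0 * X 2) := rfl
  have hUdef : ∀ k, U k = X 1 ^ 2 - C (e ^ (2 * k)) * X 2 ^ 2 := fun _ => rfl
  have hU2 : ∀ k, (U k).IsHomogeneous 2 := fun k => by
    rw [hUdef]
    exact (isHomogeneous_X_pow _ _).sub (isHomogeneous_C_mul_X_pow _ _ _)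
  have hUne : ∀ k, U k ≠ 0 := fun k hk => by
    rw [hUdef] at hk
    have := congrArg (eval ![(0:K),1,0]) hk
    simp at this
  have hprodhom : ∀ (f : ℕ → ℕ) (m : ℕ),
      (∏ j ∈ Finset.range m, U (f j)).IsHomogeneous (2 * m) := by
    intro f m
    have := IsHomogeneous.prod (Finset.range m) (fun j => U (f j)) (fun _ => 2)
      (fun j _ => hU2 (f j))
    simpa [Finset.sum_const, mul_comm] using this
  have hprodne : ∀ (f : ℕ → ℕ) (m : ℕ), (∏ j ∈ Finset.range m, U (f j)) ≠ 0 :=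
    fun f m => Finset.prod_ne_zero_iff.mpr fun j _ => hUne (f j)
  have hstep : ∀ (n : ℕ) (i : Fin 3), iterComp P (n + 1) i = aeval (iterComp P n) (P i) :=
    fun n i => rfl
  intro n hn
  induction n, hn using Nat.le_induction with
  | base =>
    refine ⟨1, 0, one_ne_zero, isHomogeneous_one _ _, fun hev => absurd hev (by decide), ?_⟩
    intro _
    have h0 : ∀ i, iterComp P 1 i = aeval (fun i => (X i : MvPolynomial (Fin 3) K)) (P i) := by
      intro i
      rw [hstep 0 i]
      rfl
    refine ⟨?_, ?_, ?_⟩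
    · rw [h0 0, hP0]
      simp [aeval_X_left_apply, hUdef, Finset.prod_range_one]
    · rw [h0 1, hP1]
      simp [aeval_X_left_apply]
    · rw [h0 2, hP2]
      simp [aeval_X_left_apply]
  | succ n hn IH =>
    obtain ⟨h, dd, hne, hhom, hev, hodd⟩ := IH
    have G := iterComp P n
    rcases Nat.even_or_odd n with hpar | hpar
    · -- n even, n+1 odd
      obtain ⟨hA, hB, hC⟩ := hev hpar
      obtain ⟨m, hm⟩ := id hpar
      have hhalf : (n + 1) / 2 = n / 2 := by omega
      have hhalf2 : (n + 1 + 1) / 2 = n / 2 + 1 := by omega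
      have h2n : 2 * (n / 2) = n := by omega
      refine ⟨h ^ 2 * ∏ j ∈ Finset.range (n / 2), U (2 * j),
        dd * 2 + 2 * (n / 2),
        mul_ne_zero (pow_ne_zero _ hne) (hprodne _ _),
        ((hhom.pow 2).mul (hprodhom _ _)),
        fun hcon => absurd hpar (Nat.even_add_one.mp hcon), fun _ => ?_⟩
      have he0 : iterComp P (n + 1) 0 =
          (iterComp P n 1) ^ 2 - (iterComp P n 2) ^ 2 := by
        rw [hstep n 0, hP0]; simp
      have he1 : iterComp P (n + 1) 1 = iterComp P n 0 * iterComp P n 1 := by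
        rw [hstep n 1, hP1]; simp
      have he2 : iterComp P (n + 1) 2 = C e * (iterComp P n 0 * iterComp P n 2) := by
        rw [hstep n 2, hP2]; simp
      refine ⟨?_, ?_, ?_⟩
      · rw [he0, hB, hC, hhalf2, Finset.prod_range_succ, h2n, hUdef n]
        simp only [map_pow]
        ring
      · rw [he1, hA, hB, hhalf]
        ring
      · rw [he2, hA, hC, hhalf]
        simp only [pow_succ, map_pow, _root_.map_mul]
        ring
    · -- n odd, n+1 even
      obtain ⟨hA, hB, hC⟩ := hodd (Nat.not_even_iff_odd.mpr hpar)
      obtain ⟨m, hm⟩ := id hpar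
      have hhalf : (n + 1) / 2 = n / 2 + 1 := by omega
      have h2n : 2 * (n / 2) + 1 = n := by omega
      refine ⟨h ^ 2 * (X 0 * ∏ j ∈ Finset.range (n / 2), U (2 * j + 1)),
        dd * 2 + (1 + 2 * (n / 2)),
        mul_ne_zero (pow_ne_zero _ hne) (mul_ne_zero (X_ne_zero _) (hprodne _ _)),
        ((hhom.pow 2).mul
          ((isHomogeneous_X _ _).mul (hprodhom _ _))),
        fun _ => ?_, fun hcon => absurd (Odd.add_one hpar) hcon⟩
      have he0 : iterComp P (n + 1) 0 =
          (iterComp P n 1) ^ 2 - (iterComp P n 2) ^ 2 := by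
        rw [hstep n 0, hP0]; simp
      have he1 : iterComp P (n + 1) 1 = iterComp P n 0 * iterComp P n 1 := by
        rw [hstep n 1, hP1]; simp
      have he2 : iterComp P (n + 1) 2 = C e * (iterComp P n 0 * iterComp P n 2) := by
        rw [hstep n 2, hP2]; simp
      refine ⟨?_, ?_, ?_⟩
      · rw [he0, hB, hC, hhalf, Finset.prod_range_succ, h2n, hUdef n]
        simp only [map_pow]
        ring
      · rw [he1, hA, hB, hhalf]
        ring
      · rw [he2, hA, hC, hhalf]
        simp only [pow_succ, map_pow, _root_.map_mul]
        ring
end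
end

section
/- Let K be an algebraically closed field of characteristic 0, let i ∈ K be a primitive 4th root of unity, and for a, e ∈ K let f_{a,e} : K³ → K³ be the polynomial map f_{a,e}(X,Y,Z) = (aX² + Z², XY, Y² + eXZ). Then: (i) Aut(f_{a,e}) is exactly the cyclic subgroup 𝒢₄ of PGL₃(K) of order 4 generated by the class [diag(1, i, −1)]; and (ii) if (a,e) ≠ (a',e'), then f_{a,e} and f_{a',e'} are not PGL₃(K)-conjugate. -/
open Matrix MvPolynomial
open scoped Classical

noncomputable section

namespace Stmt14Aux

theorem key1 {K : Type*} [Field K] [CharZero K]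
    (a e A E p q r s t u x y z : K)
    (hdet : p*(t*z - u*y) - q*(s*z - u*x) + r*(s*y - t*x) ≠ 0)
    (h0a : a*p^2 + x^2 = A*p) (h0b : a*q^2 + y^2 = r) (h0c : a*r^2 + z^2 = p)
    (h0e : 2*a*p*r + 2*x*z = E*r)
    (h1a : p*s = A*s) (h1b : q*t = u) (h1c : r*u = s) (h1d : p*t + q*s = t)
    (h1e : p*u + r*s = E*u) (h1f : q*u + r*t = 0)
    (h2a : s^2 + e*p*x = A*x) (h2b : t^2 + e*q*y = z) (h2c : u^2 + e*r*z = x)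
    (h2d : 2*s*t + e*(p*y + q*x) = y) (h2e : 2*s*u + e*(p*z + r*x) = E*z)
    (h2f : 2*t*u + e*(q*z + r*y) = 0) :
    q = 0 ∧ r = 0 ∧ s = 0 ∧ u = 0 ∧ x = 0 ∧ y = 0 ∧ p = 1 ∧ t^2 = z ∧ z^2 = 1
      ∧ a = A ∧ e = E := by
  by_cases hu : u = 0
  · -- diagonal case
    subst hu
    have hs0 : s = 0 := by linear_combination -h1c
    subst hs0
    have ht : t ≠ 0 := by
      intro h; apply hdet; rw [h]; ring
    have hq0 : q = 0 := by
      rcases mul_eq_zero.mp h1b with h | h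
      · exact h
      · exact absurd h ht
    subst hq0
    have hr0 : r = 0 := by
      have h' : r * t = 0 := by linear_combination h1f
      rcases mul_eq_zero.mp h' with h | h
      · exact h
      · exact absurd h ht
    subst hr0
    have hp1 : p = 1 := by
      have h' : t * (p - 1) = 0 := by linear_combination h1d
      rcases mul_eq_zero.mp h' with h | h
      · exact absurd h ht
      · linear_combination h
    subst hp1
    have hy0 : y = 0 := by
      have h' : y^2 = 0 := by linear_combination h0b
      exact pow_eq_zero_iff (two_ne_zero) |>.mp h'
    subst hy0
    have hz2 : z^2 = 1 := by linear_combination h0c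
    have hzne : z ≠ 0 := by
      intro h; rw [h] at hz2; simp at hz2
    have hx0 : x = 0 := by
      have h' : 2*(x*z) = 0 := by linear_combination h0e
      have h'' : x * z = 0 := (mul_eq_zero.mp h').resolve_left two_ne_zero
      rcases mul_eq_zero.mp h'' with h | h
      · exact h
      · exact absurd h hzne
    subst hx0
    have haA : a = A := by linear_combination h0a
    have ht2 : t^2 = z := by linear_combination h2b
    have heE : e = E := by
      have h' : z * (e - E) = 0 := by linear_combination h2e
      rcases mul_eq_zero.mp h' with h | h
      · exact absurd h hzne
      · linear_combination h
    exact ⟨rfl, rfl, rfl, rfl, rfl, rfl, rfl, ht2, hz2, haA, heE⟩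
  · -- u ≠ 0 case: derive contradiction
    exfalso
    subst h1b
    have hq : q ≠ 0 := fun h => hu (by rw [h]; ring)
    have ht : t ≠ 0 := fun h => hu (by rw [h]; ring)
    have hqt : q * t ≠ 0 := hu
    have hr : r = -q^2 := by
      have h' : t * (q^2 + r) = 0 := by linear_combination h1f
      rcases mul_eq_zero.mp h' with h | h
      · exact absurd h ht
      · linear_combination h
    subst hr
    have hs : s = -(q^3*t) := by linear_combination -h1c
    subst hs
    have hp : p = A := by
      have h' : (q^3*t) * (p - A) = 0 := by linear_combination -h1a
      rcases mul_eq_zero.mp h' with h | h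
      · exact absurd h (by
          exact mul_ne_zero (pow_ne_zero 3 hq) ht)
      · linear_combination h
    subst hp
    have hA : p = q^4 + 1 := by
      have h' : t * (p - (q^4+1)) = 0 := by linear_combination h1d
      rcases mul_eq_zero.mp h' with h | h
      · exact absurd h ht
      · linear_combination h
    subst hA
    have hE : E = 2*q^4 + 1 := by
      have h' : (q*t) * (E - (2*q^4+1)) = 0 := by linear_combination -h1e
      rcases mul_eq_zero.mp h' with h | h
      · exact absurd h hqt
      · linear_combination h
    subst hE
    have hq6t2 : q^6 * t^2 ≠ 0 := mul_ne_zero (pow_ne_zero 6 hq) (pow_ne_zero 2 ht)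
    have he1 : e ≠ 1 := by
      intro h
      rw [h] at h2a
      exact hq6t2 (by linear_combination h2a)
    have he1' : (1:K) - e ≠ 0 := fun h => he1 (by linear_combination -h)
    have he0 : e ≠ 0 := by
      intro h
      rw [h] at h2f
      have : (2:K) * (q * t^2) = 0 := by linear_combination h2f
      have h2 : q * t^2 ≠ 0 := mul_ne_zero hq (pow_ne_zero 2 ht)
      rcases mul_eq_zero.mp this with h | h
      · exact two_ne_zero h
      · exact h2 h
    have hz1 : (1-e)*z = 3*t^2 := by
      have h' : q * ((1-e)*z - 3*t^2) = 0 := by linear_combination -h2f - q*h2b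
      rcases mul_eq_zero.mp h' with h | h
      · exact absurd h hq
      · linear_combination h
    have hx1 : (1-e)*x = q^2*t^2*(1-4*e) := by
      linear_combination (e-1)*h2c - e*q^2*hz1
    have hstar2 : q^4 = (q^4+1)*(1-4*e) := by
      have h' : q^2*t^2 * (q^4 - (q^4+1)*(1-4*e)) = 0 := by
        linear_combination h2a + (q^4+1)*hx1
      have h2 : q^2*t^2 ≠ 0 := mul_ne_zero (pow_ne_zero 2 hq) (pow_ne_zero 2 ht)
      rcases mul_eq_zero.mp h' with h | h
      · exact absurd h h2
      · linear_combination h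
    have hstar3 : 4*q^4*(e+2) + 3 = 0 := by
      have h' : t^2*(e-1) * (4*q^4*(e+2)+3) = 0 := by
        linear_combination (1-e)*h2e - (e*(q^4+1)-(2*q^4+1))*hz1 + e*q^2*hx1
      have h2 : t^2*(e-1) ≠ 0 :=
        mul_ne_zero (pow_ne_zero 2 ht) (sub_ne_zero.mpr he1)
      rcases mul_eq_zero.mp h' with h | h
      · exact absurd h h2
      · exact h
    have hq4 : 2*q^4 = e - 1 := by linear_combination hstar3/4 - hstar2/4
    have h2e2 : 2*e^2 + 2*e - 1 = 0 := by linear_combination -2*e*hq4 + hstar2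
    have hd4 : 4*e^2*q^4 = e + 2 := by
      have h' : t^2*(1-e) * (4*e^2*q^4 - (e+2)) = 0 := by
        linear_combination e*q*(1-e)*h2d - (1-e)*(e*(q^4+1)-1)*h2b
          - (e*(q^4+1)-1)*hz1 - e^2*q^2*hx1
      have h2 : t^2*(1-e) ≠ 0 := mul_ne_zero (pow_ne_zero 2 ht) he1'
      rcases mul_eq_zero.mp h' with h | h
      · exact absurd h h2
      · linear_combination h
    have : e = 1 := by linear_combination hd4/4 - (e^2/2)*hq4 - ((e-2)/4)*h2e2
    exact he1 this

noncomputable def fm {K : Type*} [Field K] (a e : K) : (Fin 3 → K) → Fin 3 → K :=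
  fun v => ![a * v 0 ^ 2 + v 2 ^ 2, v 0 * v 1, v 1 ^ 2 + e * (v 0 * v 2)]

theorem classify {K : Type*} [Field K] [CharZero K] (a e A E c : K) (hc : c ≠ 0)
    (N : Matrix (Fin 3) (Fin 3) K) (hdet : N.det ≠ 0)
    (hv : ∀ v, fm a e (N *ᵥ v) = c • (N *ᵥ fm A E v)) :
    a = A ∧ e = E ∧ ∃ τ : K, τ ^ 4 = 1 ∧ τ ^ 2 = c⁻¹ * N 2 2 ∧
      N = c • Matrix.diagonal ![1, τ, τ ^ 2] := by
  have hcc : c * c⁻¹ = 1 := mul_inv_cancel₀ hc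
  have r00 := congrFun (hv ![1,0,0]) 0
  have r01 := congrFun (hv ![1,0,0]) 1
  have r02 := congrFun (hv ![1,0,0]) 2
  have r10 := congrFun (hv ![0,1,0]) 0
  have r11 := congrFun (hv ![0,1,0]) 1
  have r12 := congrFun (hv ![0,1,0]) 2
  have r20 := congrFun (hv ![0,0,1]) 0
  have r21 := congrFun (hv ![0,0,1]) 1
  have r22 := congrFun (hv ![0,0,1]) 2
  have r31 := congrFun (hv ![1,1,0]) 1
  have r32 := congrFun (hv ![1,1,0]) 2
  have r40 := congrFun (hv ![1,0,1]) 0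
  have r41 := congrFun (hv ![1,0,1]) 1
  have r42 := congrFun (hv ![1,0,1]) 2
  have r51 := congrFun (hv ![0,1,1]) 1
  have r52 := congrFun (hv ![0,1,1]) 2
  simp [fm, Matrix.mulVec, dotProduct, Fin.sum_univ_three] at r00 r01 r02 r10 r11 r12 r20 r21 r22 r31 r32 r40 r41 r42 r51 r52
  obtain ⟨hq, hr, hs, hu, hx, hy, hp, ht2, hz2, haA, heE⟩ :=
    key1 a e A E (c⁻¹ * N 0 0) (c⁻¹ * N 0 1) (c⁻¹ * N 0 2) (c⁻¹ * N 1 0)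
      (c⁻¹ * N 1 1) (c⁻¹ * N 1 2) (c⁻¹ * N 2 0) (c⁻¹ * N 2 1) (c⁻¹ * N 2 2)
      (by
        have hd3 : (c⁻¹ * N 0 0)*((c⁻¹ * N 1 1)*(c⁻¹ * N 2 2) - (c⁻¹ * N 1 2)*(c⁻¹ * N 2 1))
            - (c⁻¹ * N 0 1)*((c⁻¹ * N 1 0)*(c⁻¹ * N 2 2) - (c⁻¹ * N 1 2)*(c⁻¹ * N 2 0))
            + (c⁻¹ * N 0 2)*((c⁻¹ * N 1 0)*(c⁻¹ * N 2 1) - (c⁻¹ * N 1 1)*(c⁻¹ * N 2 0))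
            = (c⁻¹)^3 * N.det := by
          rw [Matrix.det_fin_three]; ring
        rw [hd3]
        exact mul_ne_zero (pow_ne_zero _ (inv_ne_zero hc)) hdet)
      (by linear_combination (c⁻¹)^2 * r00 + A*(c⁻¹ * N 0 0)*hcc)
      (by linear_combination (c⁻¹)^2 * r10 + (c⁻¹ * N 0 2)*hcc)
      (by linear_combination (c⁻¹)^2 * r20 + (c⁻¹ * N 0 0)*hcc)
      (by linear_combination (c⁻¹)^2 * (r40 - r00 - r20) + E*(c⁻¹ * N 0 2)*hcc)
      (by linear_combination (c⁻¹)^2 * r01 + A*(c⁻¹ * N 1 0)*hcc)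
      (by linear_combination (c⁻¹)^2 * r11 + (c⁻¹ * N 1 2)*hcc)
      (by linear_combination (c⁻¹)^2 * r21 + (c⁻¹ * N 1 0)*hcc)
      (by linear_combination (c⁻¹)^2 * (r31 - r01 - r11) + (c⁻¹ * N 1 1)*hcc)
      (by linear_combination (c⁻¹)^2 * (r41 - r01 - r21) + E*(c⁻¹ * N 1 2)*hcc)
      (by linear_combination (c⁻¹)^2 * (r51 - r11 - r21))
      (by linear_combination (c⁻¹)^2 * r02 + A*(c⁻¹ * N 2 0)*hcc)
      (by linear_combination (c⁻¹)^2 * r12 + (c⁻¹ * N 2 2)*hcc)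
      (by linear_combination (c⁻¹)^2 * r22 + (c⁻¹ * N 2 0)*hcc)
      (by linear_combination (c⁻¹)^2 * (r32 - r02 - r12) + (c⁻¹ * N 2 1)*hcc)
      (by linear_combination (c⁻¹)^2 * (r42 - r02 - r22) + E*(c⁻¹ * N 2 2)*hcc)
      (by linear_combination (c⁻¹)^2 * (r52 - r12 - r22))
  refine ⟨haA, heE, c⁻¹ * N 1 1, ?_, ht2, ?_⟩
  · have : ((c⁻¹ * N 1 1)^2)^2 = 1 := by rw [ht2]; exact hz2
    linear_combination this
  · have e01 : N 0 1 = 0 := by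
      have h := hq; field_simp at h; simpa using h
    have e02 : N 0 2 = 0 := by
      have h := hr; field_simp at h; simpa using h
    have e10 : N 1 0 = 0 := by
      have h := hs; field_simp at h; simpa using h
    have e12 : N 1 2 = 0 := by
      have h := hu; field_simp at h; simpa using h
    have e20 : N 2 0 = 0 := by
      have h := hx; field_simp at h; simpa using h
    have e21 : N 2 1 = 0 := by
      have h := hy; field_simp at h; simpa using h
    have e00 : N 0 0 = c := by
      have h := hp; field_simp at h; linear_combination h
    have e22 : N 1 1 ^ 2 = c * N 2 2 := by
      linear_combination c^2*ht2 + (c*N 2 2 - N 1 1^2*(c*c⁻¹+1))*hcc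
    ext i j
    fin_cases i <;> fin_cases j <;>
      simp [Matrix.diagonal, e01, e02, e10, e12, e20, e21, e00] <;>
      field_simp
    linear_combination -e22

variable {K : Type*} [Field K]

/-- Scalar change does not change the class in the quotient. -/
theorem mk_eq_mk_of_smul (M M' : GL (Fin 3) K) (d : K) (hd : d ≠ 0)
    (h : (M : Matrix (Fin 3) (Fin 3) K) = d • (M' : Matrix (Fin 3) (Fin 3) K)) :
    (QuotientGroup.mk M : PGL3 K) = QuotientGroup.mk M' := by
  have hdetd : ((d • (1 : Matrix (Fin 3) (Fin 3) K))).det ≠ 0 := by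
    rw [Matrix.det_smul, Matrix.det_one]
    simpa using pow_ne_zero 3 hd
  set Z := Matrix.GeneralLinearGroup.mkOfDetNeZero _ hdetd with hZdef
  have hZcoe : (Z : Matrix (Fin 3) (Fin 3) K) = d • (1 : Matrix (Fin 3) (Fin 3) K) := rfl
  have hZc : Z ∈ Subgroup.center (GL (Fin 3) K) := by
    rw [Subgroup.mem_center_iff]
    intro g
    apply Units.ext
    rw [Units.val_mul, Units.val_mul, hZcoe, Matrix.mul_smul, Matrix.smul_mul,
      Matrix.mul_one, Matrix.one_mul]
  have hMZ : M = Z * M' := by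
    apply Units.ext
    rw [Units.val_mul, hZcoe, Matrix.smul_mul, Matrix.one_mul, h]
  rw [hMZ]
  have h2 : (QuotientGroup.mk (Z * M') : PGL3 K)
      = QuotientGroup.mk Z * QuotientGroup.mk M' := rfl
  rw [h2, (QuotientGroup.eq_one_iff Z).2 hZc, one_mul]

/-- `AutQ F` as a subgroup of `PGL₃(K)`. -/
def autSubgroup (F : (Fin 3 → K) → (Fin 3 → K)) : Subgroup (PGL3 K) where
  carrier := AutQ F
  one_mem' := by
    refine ⟨1, rfl, 1, one_ne_zero, fun v => ?_⟩
    simp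
  mul_mem' := by
    rintro φ ψ ⟨M1, hM1, c1, hc1, hv1⟩ ⟨M2, hM2, c2, hc2, hv2⟩
    refine ⟨M1 * M2, by rw [← hM1, ← hM2]; rfl, c1 * c2, mul_ne_zero hc1 hc2, fun v => ?_⟩
    rw [Units.val_mul, ← Matrix.mulVec_mulVec, hv1, hv2, Matrix.mulVec_smul,
      Matrix.mulVec_mulVec, smul_smul]
  inv_mem' := by
    rintro φ ⟨M, hM, c, hc, hv⟩
    refine ⟨M⁻¹, by rw [← hM]; rfl, c⁻¹, inv_ne_zero hc, fun v => ?_⟩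
    have h := hv (((M⁻¹ : GL (Fin 3) K) : Matrix (Fin 3) (Fin 3) K) *ᵥ v)
    rw [Matrix.mulVec_mulVec, ← Units.val_mul, mul_inv_cancel, Units.val_one,
      Matrix.one_mulVec] at h
    have h2 : ((M⁻¹ : GL (Fin 3) K) : Matrix (Fin 3) (Fin 3) K) *ᵥ F v
        = c • F (((M⁻¹ : GL (Fin 3) K) : Matrix (Fin 3) (Fin 3) K) *ᵥ v) := by
      conv_lhs => rw [h]
      rw [Matrix.mulVec_smul, Matrix.mulVec_mulVec, ← Units.val_mul, inv_mul_cancel,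
        Units.val_one, Matrix.one_mulVec]
    rw [h2, smul_smul, inv_mul_cancel₀ hc, one_smul]

theorem autQ_eq_coe (F : (Fin 3 → K) → (Fin 3 → K)) :
    AutQ F = ↑(autSubgroup F) := rfl

end Stmt14Aux

open Stmt14Aux

set_option maxHeartbeats 1000000 in
theorem stmt14 {K : Type*} [Field K] [IsAlgClosed K] [CharZero K]
    (i : K) (hi : IsPrimitiveRoot i 4) :
    let f : K → K → (Fin 3 → K) → (Fin 3 → K) := fun a e v =>
      ![a * v 0 ^ 2 + v 2 ^ 2, v 0 * v 1, v 1 ^ 2 + e * (v 0 * v 2)]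
    (∀ a e : K,
      AutQ (f a e) = ↑(Subgroup.closure {toPGL3 (Matrix.diagonal ![1, i, -1])})) ∧
    Nat.card (Subgroup.closure {toPGL3 (Matrix.diagonal ![(1 : K), i, -1])}) = 4 ∧
    ∀ a e a' e' : K, (a, e) ≠ (a', e') → ¬ PGLConj (f a e) (f a' e') := by
  intro f
  set D : Matrix (Fin 3) (Fin 3) K := Matrix.diagonal ![1, i, -1] with hD
  have hi0 : i ≠ 0 := hi.ne_zero (by norm_num)
  have hi4 : i ^ 4 = 1 := hi.pow_eq_one
  have hi2 : i ^ 2 = -1 := by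
    have h : (i ^ 2 - 1) * (i ^ 2 + 1) = 0 := by linear_combination hi4
    rcases mul_eq_zero.mp h with h | h
    · exact absurd (by linear_combination h)
        (hi.pow_ne_one_of_pos_of_lt two_ne_zero (by norm_num))
    · linear_combination h
  have hDdet : D.det ≠ 0 := by
    rw [hD, Matrix.det_diagonal, Fin.prod_univ_three]
    simp [hi0]
  set GD : GL (Fin 3) K := Matrix.GeneralLinearGroup.mkOfDetNeZero D hDdet with hGDdef
  have hGD : (GD : Matrix (Fin 3) (Fin 3) K) = D := rfl
  have htoP : toPGL3 D = QuotientGroup.mk GD := by rw [toPGL3, dif_pos hDdet]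
  have hDk : ∀ (k : ℕ) (τ : K), i ^ k = τ →
      ((GD ^ k : GL (Fin 3) K) : Matrix (Fin 3) (Fin 3) K)
        = Matrix.diagonal ![1, τ, τ ^ 2] := by
    intro k τ hk
    rw [Units.val_pow_eq_pow_val, hGD, hD, Matrix.diagonal_pow]
    have hvec : (![1, i, -1] : Fin 3 → K) ^ k = ![1, τ, τ ^ 2] := by
      funext j
      fin_cases j
      · simp
      · simpa using hk
      · show (-1 : K) ^ k = τ ^ 2
        rw [← hi2, ← pow_mul, mul_comm, pow_mul, hk]
    rw [hvec]
  have hmemD : ∀ a e : K, toPGL3 D ∈ autSubgroup (fm a e) := by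
    intro a e
    refine ⟨GD, htoP.symm, 1, one_ne_zero, fun v => ?_⟩
    rw [hGD, hD]
    funext j
    fin_cases j
    · simp [fm, Matrix.mulVec_diagonal]; try ring
    · simp [fm, Matrix.mulVec_diagonal]; try ring
    · simp [fm, Matrix.mulVec_diagonal]
      linear_combination (v 1) ^ 2 * hi2
  have hsub : ∀ a e : K, autSubgroup (fm a e) = Subgroup.closure {toPGL3 D} := by
    intro a e
    apply le_antisymm
    · intro φ hφ
      obtain ⟨M, hmk, c, hc, hvv⟩ := hφ
      have hMdet : ((M : Matrix (Fin 3) (Fin 3) K)).det ≠ 0 :=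
        ((Matrix.isUnit_iff_isUnit_det _).mp M.isUnit).ne_zero
      obtain ⟨-, -, τ, hτ4, -, hN⟩ := classify a e a e c hc _ hMdet hvv
      obtain ⟨k, -, hik⟩ := hi.eq_pow_of_pow_eq_one hτ4
      have h1 : (M : Matrix (Fin 3) (Fin 3) K)
          = c • ((GD ^ k : GL (Fin 3) K) : Matrix (Fin 3) (Fin 3) K) := by
        rw [hDk k τ hik]; exact hN
      have h2 : (QuotientGroup.mk M : PGL3 K) = QuotientGroup.mk (GD ^ k) :=
        mk_eq_mk_of_smul _ _ c hc h1
      have h3 : (QuotientGroup.mk (GD ^ k) : PGL3 K) = (QuotientGroup.mk GD) ^ k :=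
        QuotientGroup.mk_pow _ GD k
      rw [← hmk, h2, h3, ← htoP]
      exact Subgroup.pow_mem _ (Subgroup.subset_closure (Set.mem_singleton _)) k
    · rw [Subgroup.closure_le]
      intro ψ hψ
      rw [Set.mem_singleton_iff] at hψ
      subst hψ
      exact hmemD a e
  have hord : orderOf (toPGL3 D) = 4 := by
    rw [htoP]
    have hGD4 : GD ^ 4 = 1 := by
      apply Units.ext
      rw [Units.val_pow_eq_pow_val, hGD, hD, Matrix.diagonal_pow, Units.val_one]
      have hv1 : (![1, i, -1] : Fin 3 → K) ^ 4 = fun _ => 1 := by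
        funext j
        fin_cases j <;> simp [hi4] <;> norm_num
      rw [hv1, Matrix.diagonal_one]
    have hg4 : (QuotientGroup.mk GD : PGL3 K) ^ 4 = 1 := by
      rw [← QuotientGroup.mk_pow, hGD4]
      rfl
    have hg2 : (QuotientGroup.mk GD : PGL3 K) ^ 2 ≠ 1 := by
      intro hcon
      have h1 : (QuotientGroup.mk (GD ^ 2) : PGL3 K) = 1 := by
        rw [QuotientGroup.mk_pow]; exact hcon
      have h2 : GD ^ 2 ∈ Subgroup.center (GL (Fin 3) K) :=
        (QuotientGroup.eq_one_iff _).1 h1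
      have hUdet : (!![1,1,0;0,1,0;0,0,1] : Matrix (Fin 3) (Fin 3) K).det ≠ 0 := by
        simp [Matrix.det_fin_three]
      set GU : GL (Fin 3) K := Matrix.GeneralLinearGroup.mkOfDetNeZero _ hUdet with hGUdef
      have hGU : (GU : Matrix (Fin 3) (Fin 3) K) = !![1,1,0;0,1,0;0,0,1] := rfl
      have hcomm := Subgroup.mem_center_iff.1 h2 GU
      have hmat := congrArg
        (fun w : GL (Fin 3) K => ((w : Matrix (Fin 3) (Fin 3) K)) 0 1) hcomm
      simp only [Units.val_mul, Units.val_pow_eq_pow_val, hGD, hGU, hD,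
        Matrix.diagonal_pow] at hmat
      rw [Matrix.mul_apply, Matrix.mul_apply] at hmat
      simp [Fin.sum_univ_three, Matrix.diagonal, hi2] at hmat
      exact two_ne_zero (α := K) (by linear_combination -hmat)
    have hdvd := orderOf_dvd_of_pow_eq_one hg4
    have hnd : ¬ orderOf (QuotientGroup.mk GD : PGL3 K) ∣ 2 := fun h =>
      hg2 (orderOf_dvd_iff_pow_eq_one.mp h)
    have hle : orderOf (QuotientGroup.mk GD : PGL3 K) ≤ 4 :=
      Nat.le_of_dvd (by norm_num) hdvd
    interval_cases h : orderOf (QuotientGroup.mk GD : PGL3 K) <;>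
      simp_all <;> omega
  refine ⟨?_, ?_, ?_⟩
  · intro a e
    calc AutQ (f a e) = ↑(autSubgroup (fm a e)) := rfl
      _ = ↑(Subgroup.closure {toPGL3 D}) := by rw [hsub a e]
  · rw [← Subgroup.zpowers_eq_closure, Nat.card_zpowers, hord]
  · rintro a e a' e' hne ⟨M, c, hdet, hc, hv⟩
    obtain ⟨haA, heE, -⟩ := classify a e a' e' c hc M hdet hv
    exact hne (by rw [haA, heE])
end
end
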